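/- arXiv:2501.05773 — 7 statements merged into one kernel-verified Lean document; each statement's English description precedes it below -/
import Mathlib

section
/- For a 2-element set T={i,j} ⊆ [n], the coefficient r_T in the Taylor-type expansion of an affine polynomial P_n at the point θ_{P_n}=(p̃₁,…,p̃ₙ), defined by r_T = -(1/p_{[n]})·(∂/∂θ)^{T̄} P_n evaluated at θ_{P_n}, equals b̃_T = p̃_{ij} + p̃_i·p̃_j. -/
open Finset

/-- `p̃_T = -p_{[n]∖T}/p_{[n]}`. -/
noncomputable def ptilde {n : ℕ} (p : Finset (Fin n) → ℝ) (T : Finset (Fin n)) : ℝ :=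
  -p Tᶜ / p Finset.univ

/-- The mixed partial derivative `(∂/∂θ)^{Tᶜ}` of the affine polynomial
`θ ↦ ∑_{S ⊆ [n]} p_S ∏_{i∈S} θ_i`, evaluated at `θ`:  only the terms with `S ⊇ Tᶜ`
survive, each contributing `p_S · θ^{S∖Tᶜ}`. -/
noncomputable def mixedDeriv {n : ℕ} (p : Finset (Fin n) → ℝ) (T : Finset (Fin n))
    (θ : Fin n → ℝ) : ℝ :=
  ∑ U ∈ T.powerset, p (Tᶜ ∪ U) * ∏ i ∈ U, θ i

/-- `r_T = -(1/p_{[n]}) (∂/∂θ)^{T̄} P_n (θ_{P_n})` where `θ_{P_n} = (p̃₁,…,p̃ₙ)`. -/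
noncomputable def rcoeff {n : ℕ} (p : Finset (Fin n) → ℝ) (T : Finset (Fin n)) : ℝ :=
  -(1 / p Finset.univ) * mixedDeriv p T (fun i => ptilde p {i})

/-- For a two-element set `T = {i, j}`, the Taylor coefficient `r_T` of the affine
polynomial `P_n` at `θ_{P_n}` equals `b̃_T = p̃_{ij} + p̃_i p̃_j`. -/
theorem stmt_2 {n : ℕ} (p : Finset (Fin n) → ℝ) (h0 : p ∅ = 1) (hn : p Finset.univ ≠ 0)
    (i j : Fin n) (hij : i ≠ j) :
    rcoeff p {i, j} = ptilde p {i, j} + ptilde p {i} * ptilde p {j} := by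
  have hne1 : ({i} : Finset (Fin n)) ≠ {j} := by
    simp [Finset.singleton_inj, hij]
  have hne2 : ({i} : Finset (Fin n)) ≠ {i, j} := by
    intro h
    have : j ∈ ({i} : Finset (Fin n)) := h ▸ mem_insert_of_mem (mem_singleton_self j)
    exact hij (mem_singleton.mp this).symm
  have hne3 : ({j} : Finset (Fin n)) ≠ {i, j} := by
    intro h
    have : i ∈ ({j} : Finset (Fin n)) := h ▸ mem_insert_self i {j}
    exact hij (mem_singleton.mp this)
  have hne4 : (∅ : Finset (Fin n)) ≠ {i} := (singleton_ne_empty i).symm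
  have hne5 : (∅ : Finset (Fin n)) ≠ {j} := (singleton_ne_empty j).symm
  have hne6 : (∅ : Finset (Fin n)) ≠ {i, j} := (insert_ne_empty i {j}).symm
  have hpow : ({i, j} : Finset (Fin n)).powerset = {∅, {i}, {j}, {i, j}} := by
    rw [show ({i,j} : Finset (Fin n)) = insert i {j} from rfl, powerset_insert,
      show ({j} : Finset (Fin n)) = insert j ∅ from rfl, powerset_insert, powerset_empty]
    ext S
    simp only [mem_union, mem_image, mem_singleton, mem_insert]
    constructor
    · rintro ((rfl | ⟨a, rfl, rfl⟩) | ⟨a, (rfl | ⟨b, rfl, rfl⟩), rfl⟩) <;> simp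
    · rintro (rfl | rfl | rfl | rfl)
      · exact Or.inl (Or.inl rfl)
      · exact Or.inr ⟨∅, Or.inl rfl, rfl⟩
      · exact Or.inl (Or.inr ⟨∅, rfl, rfl⟩)
      · exact Or.inr ⟨{j}, Or.inr ⟨∅, rfl, rfl⟩, rfl⟩
  have h1 : ({i, j} : Finset (Fin n))ᶜ ∪ {i} = ({j} : Finset (Fin n))ᶜ := by
    ext x; by_cases hx : x = i <;> simp [hx, hij, Ne.symm hij]
  have h2 : ({i, j} : Finset (Fin n))ᶜ ∪ {j} = ({i} : Finset (Fin n))ᶜ := by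
    ext x; by_cases hx : x = j <;> simp [hx, hij, Ne.symm hij]
  have h3 : ({i, j} : Finset (Fin n))ᶜ ∪ {i, j} = Finset.univ := by
    ext x; by_cases hx : x = i <;> by_cases hy : x = j <;> simp [hx, hy]
  have h4 : ({i, j} : Finset (Fin n))ᶜ ∪ ∅ = ({i, j} : Finset (Fin n))ᶜ := by simp
  unfold rcoeff mixedDeriv ptilde
  rw [hpow]
  rw [sum_insert (by simp [hne4, hne5, hne6]),
    sum_insert (by simp [hne1, hne2]),
    sum_insert (by simp [hne3]),
    sum_singleton]
  rw [h1, h2, h3, h4]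
  rw [prod_empty, prod_singleton, prod_singleton, prod_pair hij]
  field_simp
  ring
end

section
/- For a 3-element set T={i,j,k} ⊆ [n], the coefficient r_T := -(1/p_{[n]})·(∂/∂θ)^{T̄} P_n(θ_{P_n}) equals b̃_T = p̃_{ijk} + p̃_{ij}p̃_k + p̃_{ik}p̃_j + p̃_{jk}p̃_i + 2·p̃_i·p̃_j·p̃_k. -/
open Finset

set_option maxHeartbeats 1000000 in
/-- For a three-element set `T = {i,j,k}`, the Taylor coefficient `r_T` equals
`b̃_T = p̃_{ijk} + p̃_{ij}p̃_k + p̃_{ik}p̃_j + p̃_{jk}p̃_i + 2 p̃_i p̃_j p̃_k`. -/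
theorem stmt_3 {n : ℕ} (p : Finset (Fin n) → ℝ) (h0 : p ∅ = 1) (hn : p Finset.univ ≠ 0)
    (i j k : Fin n) (hij : i ≠ j) (hik : i ≠ k) (hjk : j ≠ k) :
    rcoeff p {i, j, k}
      = ptilde p {i, j, k} + ptilde p {i, j} * ptilde p {k}
        + ptilde p {i, k} * ptilde p {j} + ptilde p {j, k} * ptilde p {i}
        + 2 * ptilde p {i} * ptilde p {j} * ptilde p {k} := by
  have key : ∀ f : Finset (Fin n) → ℝ,
      ∑ U ∈ ({i, j, k} : Finset (Fin n)).powerset, f U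
        = f ∅ + f {k} + f {j} + f {j, k} + f {i} + f {i, k} + f {i, j} + f {i, j, k} := by
    intro f
    have h1 : i ∉ insert j (insert k (∅ : Finset (Fin n))) := by simp [hij, hik]
    have h2 : j ∉ insert k (∅ : Finset (Fin n)) := by simp [hjk]
    have h3 : k ∉ (∅ : Finset (Fin n)) := by simp
    rw [show ({i,j,k} : Finset (Fin n)) = insert i (insert j (insert k ∅)) from rfl]
    simp only [Finset.sum_powerset_insert h1, Finset.sum_powerset_insert h2,
      Finset.sum_powerset_insert h3, Finset.powerset_empty, Finset.sum_singleton]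
    simp only [insert_empty_eq]
    ring
  have e0 : ({i, j, k} : Finset (Fin n))ᶜ ∪ ∅ = ({i, j, k} : Finset (Fin n))ᶜ :=
    Finset.union_empty _
  have ek : ({i, j, k} : Finset (Fin n))ᶜ ∪ {k} = ({i, j} : Finset (Fin n))ᶜ := by
    ext a
    by_cases h1 : a = i <;> by_cases h2 : a = j <;> by_cases h3 : a = k <;>
      simp_all [Finset.mem_union, Finset.mem_compl, Finset.mem_insert, Finset.mem_singleton]
  have ej : ({i, j, k} : Finset (Fin n))ᶜ ∪ {j} = ({i, k} : Finset (Fin n))ᶜ := by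
    ext a
    by_cases h1 : a = i <;> by_cases h2 : a = j <;> by_cases h3 : a = k <;>
      simp_all [Finset.mem_union, Finset.mem_compl, Finset.mem_insert, Finset.mem_singleton]
  have ejk : ({i, j, k} : Finset (Fin n))ᶜ ∪ {j, k} = ({i} : Finset (Fin n))ᶜ := by
    ext a
    by_cases h1 : a = i <;> by_cases h2 : a = j <;> by_cases h3 : a = k <;>
      simp_all [Finset.mem_union, Finset.mem_compl, Finset.mem_insert, Finset.mem_singleton]
  have ei : ({i, j, k} : Finset (Fin n))ᶜ ∪ {i} = ({j, k} : Finset (Fin n))ᶜ := by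
    ext a
    by_cases h1 : a = i <;> by_cases h2 : a = j <;> by_cases h3 : a = k <;>
      simp_all [Finset.mem_union, Finset.mem_compl, Finset.mem_insert, Finset.mem_singleton]
  have eik : ({i, j, k} : Finset (Fin n))ᶜ ∪ {i, k} = ({j} : Finset (Fin n))ᶜ := by
    ext a
    by_cases h1 : a = i <;> by_cases h2 : a = j <;> by_cases h3 : a = k <;>
      simp_all [Finset.mem_union, Finset.mem_compl, Finset.mem_insert, Finset.mem_singleton]
  have eij : ({i, j, k} : Finset (Fin n))ᶜ ∪ {i, j} = ({k} : Finset (Fin n))ᶜ := by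
    ext a
    by_cases h1 : a = i <;> by_cases h2 : a = j <;> by_cases h3 : a = k <;>
      simp_all [Finset.mem_union, Finset.mem_compl, Finset.mem_insert, Finset.mem_singleton]
  have eijk : ({i, j, k} : Finset (Fin n))ᶜ ∪ {i, j, k} = (Finset.univ : Finset (Fin n)) := by
    ext a
    by_cases h1 : a = i <;> by_cases h2 : a = j <;> by_cases h3 : a = k <;>
      simp_all [Finset.mem_union, Finset.mem_compl, Finset.mem_insert, Finset.mem_singleton]
  have hijk : i ∉ ({j, k} : Finset (Fin n)) := by simp [hij, hik]
  rw [rcoeff, mixedDeriv, key]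
  rw [e0, ek, ej, ejk, ei, eik, eij, eijk]
  rw [Finset.prod_empty, Finset.prod_singleton, Finset.prod_singleton,
    Finset.prod_pair hjk, Finset.prod_singleton, Finset.prod_pair hik,
    Finset.prod_pair hij,
    show ({i, j, k} : Finset (Fin n)) = insert i {j, k} from rfl,
    Finset.prod_insert hijk, Finset.prod_pair hjk]
  simp only [ptilde]
  field_simp
  ring
end

section
/- For a 4-element set T ⊆ [n], the coefficient r_T := -(1/p_{[n]})·(∂/∂θ)^{T̄} P_n(θ_{P_n}) satisfies r_T = b̃_T − Σ b̃_U·b̃_V, where the sum is over all unordered partitions {U,V} of T into two blocks of size 2. -/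
open Finset
open scoped Classical

/-- The set partitions of `S`: families of pairwise disjoint nonempty blocks whose
union is `S`. -/
noncomputable def setPartitions {n : ℕ} (S : Finset (Fin n)) :
    Finset (Finset (Finset (Fin n))) :=
  Finset.univ.filter (fun P => (∅ ∉ P) ∧ P.sup id = S ∧
    ∀ t ∈ P, ∀ u ∈ P, t ≠ u → Disjoint t u)

/-- `b̃_S = ∑_{k=1}^{|S|} (k-1)! ∑_{partitions of S into k blocks} ∏_{blocks T} p̃_T`. -/
noncomputable def btilde {n : ℕ} (p : Finset (Fin n) → ℝ) (S : Finset (Fin n)) : ℝ :=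
  ∑ P ∈ setPartitions S, (Nat.factorial (P.card - 1) : ℝ) * ∏ t ∈ P, ptilde p t

lemma mem_setPartitions {n : ℕ} {S : Finset (Fin n)} {P : Finset (Finset (Fin n))} :
    P ∈ setPartitions S ↔ (∅ ∉ P ∧ P.sup id = S ∧
      ∀ t ∈ P, ∀ u ∈ P, t ≠ u → Disjoint t u) := by
  simp [setPartitions]

/-- Partitions of `univ` are exactly the fiber-partitions of self-maps. -/
lemma sp_univ_eq (m : ℕ) : setPartitions (Finset.univ : Finset (Fin m)) =
    (Finset.univ : Finset (Fin m → Fin m)).image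
      (fun r => Finset.univ.image (fun x => Finset.univ.filter (fun y => r y = r x))) := by
  ext P
  rw [mem_setPartitions, Finset.mem_image]
  constructor
  · rintro ⟨h0, hsup, hdisj⟩
    have hex : ∀ x : Fin m, ∃ t ∈ P, x ∈ t := by
      intro x
      have : x ∈ P.sup id := by rw [hsup]; exact Finset.mem_univ x
      simpa using Finset.mem_sup.mp this
    choose B hBP hxB using hex
    have huniq : ∀ x, ∀ t ∈ P, x ∈ t → t = B x := by
      intro x t ht hxt
      by_contra hne
      exact Finset.disjoint_left.mp (hdisj t ht (B x) (hBP x) hne) hxt (hxB x)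
    have hBB : ∀ x y, y ∈ B x → B y = B x := fun x y hy => (huniq y (B x) (hBP x) hy).symm
    set r : Fin m → Fin m := fun x => (B x).min' ⟨x, hxB x⟩ with hr
    have hmin : ∀ x, r x ∈ B x := fun x => Finset.min'_mem _ _
    have hkey : ∀ x y : Fin m, (r y = r x ↔ B y = B x) := by
      intro x y
      constructor
      · intro h
        have h1 : B (r y) = B y := hBB y (r y) (hmin y)
        have h2 : B (r x) = B x := hBB x (r x) (hmin x)
        rw [← h1, h, h2]
      · intro h
        simp only [hr, h]
    refine ⟨r, Finset.mem_univ _, ?_⟩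
    ext t
    rw [Finset.mem_image]
    constructor
    · rintro ⟨x, -, rfl⟩
      have : Finset.univ.filter (fun y => r y = r x) = B x := by
        ext y
        simp only [Finset.mem_filter, Finset.mem_univ, true_and, hkey]
        exact ⟨fun h => h ▸ hxB y, fun h => hBB x y h⟩
      rw [this]; exact hBP x
    · intro ht
      have htne : t.Nonempty := by
        rcases Finset.eq_empty_or_nonempty t with rfl | h
        · exact absurd ht h0
        · exact h
      obtain ⟨x, hx⟩ := htne
      refine ⟨x, Finset.mem_univ x, ?_⟩
      have : t = B x := huniq x t ht hx
      rw [this]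
      ext y
      simp only [Finset.mem_filter, Finset.mem_univ, true_and, hkey]
      exact ⟨fun h => h ▸ hxB y, fun h => hBB x y h⟩
  · rintro ⟨r, -, rfl⟩
    refine ⟨?_, ?_, ?_⟩
    · intro h
      rw [Finset.mem_image] at h
      obtain ⟨x, -, hx⟩ := h
      have : x ∈ Finset.univ.filter (fun y => r y = r x) := by simp
      rw [hx] at this
      exact absurd this (Finset.notMem_empty x)
    · apply Finset.eq_univ_of_forall
      intro x
      rw [Finset.mem_sup]
      exact ⟨Finset.univ.filter (fun y => r y = r x),
        Finset.mem_image_of_mem _ (Finset.mem_univ x), by simp⟩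
    · intro t ht u hu hne
      rw [Finset.mem_image] at ht hu
      obtain ⟨x, -, rfl⟩ := ht
      obtain ⟨y, -, rfl⟩ := hu
      rw [Finset.disjoint_left]
      intro z hz hz'
      simp only [Finset.mem_filter, Finset.mem_univ, true_and] at hz hz'
      apply hne
      ext w
      simp only [Finset.mem_filter, Finset.mem_univ, true_and, ← hz, hz']

section Transport

variable {m n : ℕ} {e : Fin m → Fin n} (p : Finset (Fin n) → ℝ)

lemma image_sup_comm (P : Finset (Finset (Fin m))) :
    (P.sup id).image e = P.sup (fun t => t.image e) :=
  Finset.comp_sup_eq_sup_comp (Finset.image e)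
    (fun x y => Finset.image_union x y) (Finset.image_empty e)

lemma trans_sp (he : Function.Injective e) :
    setPartitions (Finset.univ.image e) =
      (setPartitions (Finset.univ : Finset (Fin m))).image
        (fun P => P.image (fun t => t.image e)) := by
  ext P'
  rw [mem_setPartitions, Finset.mem_image]
  constructor
  · rintro ⟨h0, hsup, hdisj⟩
    set pre : Finset (Fin n) → Finset (Fin m) :=
      fun t => Finset.univ.filter (fun x => e x ∈ t) with hpre
    have hback : ∀ t ∈ P', (pre t).image e = t := by
      intro t ht
      have hsub : t ⊆ Finset.univ.image e := by
        rw [← hsup]; exact Finset.le_sup (f := id) ht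
      ext y
      constructor
      · intro hy
        rw [Finset.mem_image] at hy
        obtain ⟨x, hx, rfl⟩ := hy
        exact (Finset.mem_filter.mp hx).2
      · intro hy
        obtain ⟨x, -, rfl⟩ := Finset.mem_image.mp (hsub hy)
        exact Finset.mem_image_of_mem e (Finset.mem_filter.mpr ⟨Finset.mem_univ x, hy⟩)
    refine ⟨P'.image pre, mem_setPartitions.mpr ⟨?_, ?_, ?_⟩, ?_⟩
    · intro h
      obtain ⟨t, ht, hpt⟩ := Finset.mem_image.mp h
      have : t = ∅ := by
        rw [← hback t ht, hpt, Finset.image_empty]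
      exact h0 (this ▸ ht)
    · apply Finset.image_injective he
      rw [image_sup_comm, Finset.sup_image]
      calc P'.sup ((fun t => t.image e) ∘ pre) = P'.sup id := by
            apply Finset.sup_congr rfl
            intro t ht
            exact hback t ht
        _ = Finset.univ.image e := hsup
    · intro t ht u hu hne
      obtain ⟨t', ht', rfl⟩ := Finset.mem_image.mp ht
      obtain ⟨u', hu', rfl⟩ := Finset.mem_image.mp hu
      rw [Finset.disjoint_left]
      intro x hx hx'
      have het : e x ∈ t' := (Finset.mem_filter.mp hx).2
      have heu : e x ∈ u' := (Finset.mem_filter.mp hx').2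
      have ht'u' : t' ≠ u' := by rintro rfl; exact hne rfl
      exact Finset.disjoint_left.mp (hdisj t' ht' u' hu' ht'u') het heu
    · rw [Finset.image_image]
      calc P'.image ((fun t => t.image e) ∘ pre) = P'.image id := Finset.image_congr
            (fun t ht => hback t ht)
        _ = P' := Finset.image_id
  · rintro ⟨P, hP, rfl⟩
    obtain ⟨h0, hsup, hdisj⟩ := mem_setPartitions.mp hP
    refine ⟨?_, ?_, ?_⟩
    · intro h
      obtain ⟨t, ht, hte⟩ := Finset.mem_image.mp h
      rw [Finset.image_eq_empty] at hte
      exact h0 (hte ▸ ht)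
    · rw [Finset.sup_image]
      have : P.sup ((id : Finset (Fin n) → Finset (Fin n)) ∘ (fun t => t.image e))
          = (P.sup id).image e := (image_sup_comm P).symm
      rw [this, hsup]
    · intro t ht u hu hne
      obtain ⟨t', ht', rfl⟩ := Finset.mem_image.mp ht
      obtain ⟨u', hu', rfl⟩ := Finset.mem_image.mp hu
      have : t' ≠ u' := by rintro rfl; exact hne rfl
      exact (Finset.disjoint_image he).mpr (hdisj t' ht' u' hu' this)

lemma himg_inj (he : Function.Injective e) :
    Function.Injective (fun t : Finset (Fin m) => t.image e) :=
  Finset.image_injective he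

lemma btilde_transport (he : Function.Injective e) : btilde p (Finset.univ.image e) =
    ∑ P ∈ setPartitions (Finset.univ : Finset (Fin m)),
      (Nat.factorial (P.card - 1) : ℝ) * ∏ t ∈ P, ptilde p (t.image e) := by
  rw [btilde, trans_sp he,
    Finset.sum_image (fun x _ y _ h => Finset.image_injective (himg_inj he) h)]
  apply Finset.sum_congr rfl
  intro P _
  rw [Finset.card_image_of_injective _ (himg_inj he),
    Finset.prod_image (fun x _ y _ h => himg_inj he h)]

lemma filtered_transport (he : Function.Injective e) :
    ∑ P ∈ (setPartitions (Finset.univ.image e)).filter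
        (fun P => P.card = 2 ∧ ∀ t ∈ P, t.card = 2),
      ∏ t ∈ P, btilde p t
    = ∑ P ∈ (setPartitions (Finset.univ : Finset (Fin m))).filter
        (fun P => P.card = 2 ∧ ∀ t ∈ P, t.card = 2),
      ∏ t ∈ P, btilde p (t.image e) := by
  rw [trans_sp he]
  rw [Finset.filter_image]
  rw [Finset.sum_image (fun x _ y _ h => Finset.image_injective (himg_inj he) h)]
  refine Finset.sum_congr (Finset.filter_congr (fun P _ => ?_))
    (fun P _ => Finset.prod_image (fun x _ y _ h => himg_inj he h))
  · constructor
    · rintro ⟨h1, h2⟩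
      rw [Finset.card_image_of_injective _ (himg_inj he)] at h1
      refine ⟨h1, fun t ht => ?_⟩
      have := h2 (t.image e) (Finset.mem_image_of_mem _ ht)
      rwa [Finset.card_image_of_injective _ he] at this
    · rintro ⟨h1, h2⟩
      refine ⟨by rwa [Finset.card_image_of_injective _ (himg_inj he)], fun t ht => ?_⟩
      obtain ⟨u, hu, rfl⟩ := Finset.mem_image.mp ht
      rw [Finset.card_image_of_injective _ he]
      exact h2 u hu

lemma powerset_transport (he : Function.Injective e) : (Finset.univ.image e).powerset =
    Finset.univ.powerset.image (fun s => s.image e) := by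
  ext u
  rw [Finset.mem_powerset, Finset.mem_image, Finset.subset_image_iff]
  constructor
  · rintro ⟨s, hs, rfl⟩; exact ⟨s, Finset.mem_powerset.mpr hs, rfl⟩
  · rintro ⟨s, hs, rfl⟩; exact ⟨s, Finset.mem_powerset.mp hs, rfl⟩

lemma rcoeff_transport (he : Function.Injective e) (hn : p Finset.univ ≠ 0) :
    rcoeff p (Finset.univ.image e) =
      ∑ s ∈ (Finset.univ : Finset (Fin m)).powerset,
        ptilde p ((Finset.univ \ s).image e) * ∏ j ∈ s, ptilde p (Finset.image e {j}) := by
  rw [rcoeff, mixedDeriv, powerset_transport he,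
    Finset.sum_image (fun x _ y _ h => himg_inj he h), Finset.mul_sum]
  apply Finset.sum_congr rfl
  intro s hs
  have hc : ((Finset.univ \ s).image e)ᶜ = (Finset.univ.image e)ᶜ ∪ s.image e := by
    rw [Finset.image_sdiff _ _ he, compl_sdiff, himp_eq, sup_comm]
    rfl
  have hp : p ((Finset.univ.image e)ᶜ ∪ s.image e)
      = -(ptilde p ((Finset.univ \ s).image e)) * p Finset.univ := by
    rw [ptilde, hc]
    field_simp
  rw [hp, Finset.prod_image (fun x _ y _ h => he h)]
  simp only [Finset.image_singleton]
  field_simp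

lemma ptilde_empty (hn : p Finset.univ ≠ 0) : ptilde p (∅ : Finset (Fin n)) = -1 := by
  rw [ptilde, Finset.compl_empty, neg_div, div_self hn]

end Transport

lemma sp2 : setPartitions (Finset.univ : Finset (Fin 2)) =
    ({ {{0,1}}, {{0},{1}} } : Finset (Finset (Finset (Fin 2)))) := by
  rw [sp_univ_eq]; decide

lemma btilde_pair {n : ℕ} (p : Finset (Fin n) → ℝ) {x y : Fin n} (hxy : x ≠ y) :
    btilde p {x, y} = ptilde p {x, y} + ptilde p {x} * ptilde p {y} := by
  set e : Fin 2 → Fin n := ![x, y] with he'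
  have he : Function.Injective e := by
    intro a b h
    fin_cases a <;> fin_cases b <;>
      simp only [he', Matrix.cons_val_zero, Matrix.cons_val_one, Matrix.head_cons] at h <;>
      first | rfl | exact absurd h hxy | exact absurd h.symm hxy
  have himg : Finset.univ.image e = {x, y} := by
    rw [show (Finset.univ : Finset (Fin 2)) = {0, 1} from by decide]
    simp [he']
  rw [← himg, btilde_transport p he, sp2]
  rw [Finset.sum_insert (by decide), Finset.sum_singleton]
  rw [Finset.prod_singleton, Finset.prod_insert (by decide), Finset.prod_singleton]
  norm_num
  simp [he', himg]
  exact congrArg _ himg.symm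

set_option maxRecDepth 1000000 in
lemma sp4 : setPartitions (Finset.univ : Finset (Fin 4)) =
    ({ {{0,1,2,3}},
       {{0,1,2},{3}}, {{0,1,3},{2}}, {{0,2,3},{1}}, {{1,2,3},{0}},
       {{0,1},{2,3}}, {{0,2},{1,3}}, {{0,3},{1,2}},
       {{0,1},{2},{3}}, {{0,2},{1},{3}}, {{0,3},{1},{2}},
       {{1,2},{0},{3}}, {{1,3},{0},{2}}, {{2,3},{0},{1}},
       {{0},{1},{2},{3}} } : Finset (Finset (Finset (Fin 4)))) := by
  rw [sp_univ_eq]; decide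

set_option maxRecDepth 1000000 in
lemma sp4_filter : (setPartitions (Finset.univ : Finset (Fin 4))).filter
      (fun P => P.card = 2 ∧ ∀ t ∈ P, t.card = 2) =
    ({ {{0,1},{2,3}}, {{0,2},{1,3}}, {{0,3},{1,2}} } : Finset (Finset (Finset (Fin 4)))) := by
  rw [sp4]; decide

set_option maxRecDepth 1000000 in
lemma ps4 : (Finset.univ : Finset (Fin 4)).powerset =
    ({ ∅, {0}, {1}, {2}, {3}, {0,1}, {0,2}, {0,3}, {1,2}, {1,3}, {2,3},
       {0,1,2}, {0,1,3}, {0,2,3}, {1,2,3}, {0,1,2,3} } : Finset (Finset (Fin 4))) := by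
  decide

set_option maxHeartbeats 2000000 in
/-- For a four-element set `T ⊆ [n]`,
`r_T = b̃_T − ∑_{{U,V} partition of T, |U|=|V|=2} b̃_U b̃_V`. -/
theorem stmt_4 {n : ℕ} (p : Finset (Fin n) → ℝ) (h0 : p ∅ = 1) (hn : p Finset.univ ≠ 0)
    (T : Finset (Fin n)) (hT : T.card = 4) :
    rcoeff p T = btilde p T -
      ∑ P ∈ (setPartitions T).filter (fun P => P.card = 2 ∧ ∀ t ∈ P, t.card = 2),
        ∏ t ∈ P, btilde p t := by
  set e : Fin 4 → Fin n := fun i => (T.orderIsoOfFin hT i : Fin n) with he'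
  have he : Function.Injective e := by
    intro a b h
    exact (T.orderIsoOfFin hT).injective (Subtype.ext h)
  have hTe : Finset.univ.image e = T := by
    ext x
    simp only [Finset.mem_image, Finset.mem_univ, true_and]
    constructor
    · rintro ⟨i, rfl⟩; exact (T.orderIsoOfFin hT i).2
    · intro hx
      refine ⟨(T.orderIsoOfFin hT).symm ⟨x, hx⟩, ?_⟩
      show ((T.orderIsoOfFin hT) ((T.orderIsoOfFin hT).symm ⟨x, hx⟩) : Fin n) = x
      rw [OrderIso.apply_symm_apply]
  have hne : ∀ i j : Fin 4, i ≠ j → e i ≠ e j := fun i j hij h => hij (he h)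
  rw [← hTe, rcoeff_transport p he hn, btilde_transport p he, filtered_transport p he]
  rw [sp4_filter, sp4, ps4]
  simp (config := { decide := true }) only [Finset.sum_insert, Finset.sum_singleton,
    Finset.prod_insert, Finset.prod_singleton, Finset.card_insert_of_notMem,
    Finset.card_singleton, Finset.sum_empty, Finset.prod_empty,
    Finset.mem_insert, Finset.mem_singleton, Finset.notMem_empty, ne_eq,
    show (Finset.univ \ (∅ : Finset (Fin 4))) = {0,1,2,3} from by decide,
    show (Finset.univ \ ({0} : Finset (Fin 4))) = {1,2,3} from by decide,
    show (Finset.univ \ ({1} : Finset (Fin 4))) = {0,2,3} from by decide,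
    show (Finset.univ \ ({2} : Finset (Fin 4))) = {0,1,3} from by decide,
    show (Finset.univ \ ({3} : Finset (Fin 4))) = {0,1,2} from by decide,
    show (Finset.univ \ ({0,1} : Finset (Fin 4))) = {2,3} from by decide,
    show (Finset.univ \ ({0,2} : Finset (Fin 4))) = {1,3} from by decide,
    show (Finset.univ \ ({0,3} : Finset (Fin 4))) = {1,2} from by decide,
    show (Finset.univ \ ({1,2} : Finset (Fin 4))) = {0,3} from by decide,
    show (Finset.univ \ ({1,3} : Finset (Fin 4))) = {0,2} from by decide,
    show (Finset.univ \ ({2,3} : Finset (Fin 4))) = {0,1} from by decide,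
    show (Finset.univ \ ({0,1,2} : Finset (Fin 4))) = {3} from by decide,
    show (Finset.univ \ ({0,1,3} : Finset (Fin 4))) = {2} from by decide,
    show (Finset.univ \ ({0,2,3} : Finset (Fin 4))) = {1} from by decide,
    show (Finset.univ \ ({1,2,3} : Finset (Fin 4))) = {0} from by decide,
    show (Finset.univ \ ({0,1,2,3} : Finset (Fin 4))) = ∅ from by decide,
    Finset.image_insert, Finset.image_singleton, Finset.image_empty]
  rw [btilde_pair p (hne 0 1 (by decide)), btilde_pair p (hne 2 3 (by decide)),
    btilde_pair p (hne 0 2 (by decide)), btilde_pair p (hne 1 3 (by decide)),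
    btilde_pair p (hne 0 3 (by decide)), btilde_pair p (hne 1 2 (by decide))]
  rw [ptilde_empty p hn]
  norm_num [Nat.factorial]
  ring
end

section
/- Let λ>0, p₁,p₂,p₁₂>0 and c := (p₁p₂−p₁₂)/p₁₂² > 0. Define the measure μ on (0,∞)² with density f(x₁,x₂) = p₁₂^{-λ}/Γ(λ)² · exp(−(p₂/p₁₂)x₁ − (p₁/p₁₂)x₂) · (x₁x₂)^{λ−1} · F₁(λ; c·x₁x₂), where F₁(λ;z)=Σ_{k≥0} z^k/((λ)_k k!). Then the Laplace transform of μ is ∫∫ e^{−θ₁x₁−θ₂x₂} f(x₁,x₂) dx₁dx₂ = (1+p₁θ₁+p₂θ₂+p₁₂θ₁θ₂)^{−λ} for θ₁,θ₂ ≥ 0. -/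
open MeasureTheory Real Set Polynomial Filter
open scoped ENNReal NNReal

namespace Stmt9Aux


noncomputable def poch (lam : ℝ) (k : ℕ) : ℝ := (ascPochhammer ℝ k).eval lam

lemma poch_zero (lam : ℝ) : poch lam 0 = 1 := by simp [poch]

lemma poch_succ (lam : ℝ) (k : ℕ) : poch lam (k + 1) = poch lam k * (lam + k) := by
  simp [poch, ascPochhammer_succ_eval]

lemma poch_pos {lam : ℝ} (h : 0 < lam) (k : ℕ) : 0 < poch lam k :=
  ascPochhammer_pos k lam h

lemma poch_ge {lam : ℝ} (h : 0 < lam) (k : ℕ) : min lam 1 ≤ poch lam k := by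
  induction k with
  | zero => simp [poch_zero]
  | succ n ih =>
    rw [poch_succ]
    rcases Nat.eq_zero_or_pos n with hn | hn
    · subst hn; simp [poch_zero, min_le_left lam 1]
    · have h1 : (1 : ℝ) ≤ lam + n := by
        have : (1:ℝ) ≤ (n:ℝ) := by exact_mod_cast hn
        linarith
      calc min lam 1 ≤ poch lam n := ih
        _ = poch lam n * 1 := (mul_one _).symm
        _ ≤ poch lam n * (lam + n) := by
            exact mul_le_mul_of_nonneg_left h1 (poch_pos h n).le

lemma Gamma_poch {lam : ℝ} (h : 0 < lam) (k : ℕ) :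
    Real.Gamma (lam + k) = Real.Gamma lam * poch lam k := by
  induction k with
  | zero => simp [poch_zero]
  | succ n ih =>
    have hpos : lam + n ≠ 0 := by positivity
    have : lam + (n + 1 : ℕ) = (lam + n) + 1 := by push_cast; ring
    rw [this, Real.Gamma_add_one hpos, ih, poch_succ]; ring

/-- Master summability: `(k+1) * poch(lam,k)/k! * r^k` is summable for `0 ≤ r < 1`. -/
lemma summable_master {lam : ℝ} (hlam : 0 < lam) {r : ℝ} (hr0 : 0 ≤ r) (hr : r < 1) :
    Summable (fun k : ℕ => ((k : ℝ) + 1) * (poch lam k / (k.factorial : ℝ)) * r ^ k) := by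
  rcases eq_or_lt_of_le hr0 with h0 | h0
  · apply summable_of_ne_finset_zero (s := {0})
    intro k hk
    have : k ≠ 0 := by simpa using hk
    simp [← h0, zero_pow this]
  · set f : ℕ → ℝ := fun k => ((k : ℝ) + 1) * (poch lam k / (k.factorial : ℝ)) * r ^ k with hf
    have hfpos : ∀ k, 0 < f k := by
      intro k
      have := poch_pos hlam k
      have := Nat.factorial_pos k
      positivity
    apply summable_of_ratio_test_tendsto_lt_one hr (Filter.Eventually.of_forall
      fun k => (hfpos k).ne')
    have hratio : ∀ k : ℕ, ‖f (k + 1)‖ / ‖f k‖ =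
        (1 + 1 / ((k : ℝ) + 1)) * (1 + (lam - 1) * (1 / ((k : ℝ) + 1))) * r := by
      intro k
      rw [Real.norm_of_nonneg (hfpos (k + 1)).le, Real.norm_of_nonneg (hfpos k).le, hf]
      simp only
      rw [poch_succ]
      have h1 : ((k + 1 : ℕ) : ℝ) = (k : ℝ) + 1 := by push_cast; ring
      have h2 : ((Nat.factorial (k + 1) : ℕ) : ℝ) = ((k : ℝ) + 1) * (k.factorial : ℝ) := by
        rw [Nat.factorial_succ]; push_cast; ring
      have hk1 : ((k : ℝ) + 1) ≠ 0 := by positivity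
      have hfk : (k.factorial : ℝ) ≠ 0 := by positivity
      have hpk : poch lam k ≠ 0 := (poch_pos hlam k).ne'
      rw [h1, h2]
      field_simp
      ring
    rw [show (r : ℝ) = (1 + 0) * (1 + (lam - 1) * 0) * r by ring] at *
    have t1 : Tendsto (fun k : ℕ => 1 / ((k : ℝ) + 1)) atTop (nhds 0) :=
      tendsto_one_div_add_atTop_nhds_zero_nat
    have := (((tendsto_const_nhds (x := (1:ℝ))).add t1).mul
      ((tendsto_const_nhds (x := (1:ℝ))).add (t1.const_mul (lam - 1)))).mul_const r
    refine Tendsto.congr (fun k => (hratio k).symm) ?_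
    simpa using this



lemma a_nonneg {lam : ℝ} (hlam : 0 < lam) (k : ℕ) : 0 ≤ poch lam k / (k.factorial : ℝ) := by
  have := poch_pos hlam k
  have : (0:ℝ) < (k.factorial : ℝ) := by exact_mod_cast Nat.factorial_pos k
  have := poch_pos hlam k
  positivity

/-- summability of the plain series -/
lemma summable_b {lam : ℝ} (hlam : 0 < lam) {y : ℝ} (hy0 : 0 ≤ y) (hy1 : y < 1) :
    Summable (fun k : ℕ => poch lam k / (k.factorial : ℝ) * y ^ k) := by
  refine (summable_master hlam hy0 hy1).of_nonneg_of_le (fun k => ?_) (fun k => ?_)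
  · have := a_nonneg hlam k; positivity
  · have h1 : (1 : ℝ) ≤ (k : ℝ) + 1 := by linarith [Nat.cast_nonneg (α := ℝ) k]
    have h2 : (0:ℝ) ≤ poch lam k / (k.factorial : ℝ) * y ^ k := by
      have := a_nonneg hlam k; positivity
    calc poch lam k / (k.factorial : ℝ) * y ^ k
        ≤ ((k:ℝ) + 1) * (poch lam k / (k.factorial : ℝ) * y ^ k) := le_mul_of_one_le_left h2 h1
      _ = ((k:ℝ) + 1) * (poch lam k / (k.factorial : ℝ)) * y ^ k := by ring

/-- summability of the derivative bound series -/
lemma summable_u {lam : ℝ} (hlam : 0 < lam) {r : ℝ} (hr0 : 0 ≤ r) (hr : r < 1) :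
    Summable (fun k : ℕ => poch lam k / (k.factorial : ℝ) * ((k : ℝ) * r ^ (k - 1))) := by
  rw [← summable_nat_add_iff 1]
  have hmaster := (summable_master hlam hr0 hr).mul_left (lam + 1)
  refine hmaster.of_nonneg_of_le (fun k => ?_) (fun k => ?_)
  · have := a_nonneg hlam (k+1); positivity
  · have hsimp : poch lam (k+1) / (((k+1).factorial : ℕ) : ℝ) * ((((k+1):ℕ) : ℝ) * r ^ ((k+1) - 1)) =
        (lam + k) * (poch lam k / (k.factorial : ℝ)) * r ^ k := by
      rw [poch_succ, Nat.factorial_succ, Nat.add_sub_cancel]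
      have hk1 : ((k : ℝ) + 1) ≠ 0 := by positivity
      have hfk : (k.factorial : ℝ) ≠ 0 := by positivity
      push_cast
      field_simp
    rw [hsimp]
    have hle : lam + k ≤ (lam + 1) * ((k : ℝ) + 1) := by nlinarith [Nat.cast_nonneg (α := ℝ) k]
    have h2 : (0:ℝ) ≤ poch lam k / (k.factorial : ℝ) * r ^ k := by
      have := a_nonneg hlam k; positivity
    calc (lam + k) * (poch lam k / (k.factorial : ℝ)) * r ^ k
        = (lam + k) * (poch lam k / (k.factorial : ℝ) * r ^ k) := by ring
      _ ≤ (lam + 1) * ((k : ℝ) + 1) * (poch lam k / (k.factorial : ℝ) * r ^ k) :=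
          mul_le_mul_of_nonneg_right hle h2
      _ = (lam + 1) * (((k : ℝ) + 1) * (poch lam k / (k.factorial : ℝ)) * r ^ k) := by ring

lemma hasSum_binomial {lam : ℝ} (hlam : 0 < lam) {x : ℝ} (hx0 : 0 ≤ x) (hx1 : x < 1) :
    HasSum (fun k : ℕ => poch lam k / (k.factorial : ℝ) * x ^ k) ((1 - x) ^ (-lam)) := by
  set a : ℕ → ℝ := fun k => poch lam k / (k.factorial : ℝ) with ha
  set r : ℝ := (1 + x) / 2 with hrdef
  have hxr : x < r := by rw [hrdef]; linarith
  have hr1 : r < 1 := by rw [hrdef]; linarith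
  have hr0 : 0 < r := by rw [hrdef]; linarith
  set t : Set ℝ := Ioo (-r) r with ht
  have hg : ∀ (k : ℕ) (y : ℝ), y ∈ t → HasDerivAt (fun z : ℝ => a k * z ^ k)
      (a k * ((k : ℝ) * y ^ (k - 1))) y := fun k y _ => (hasDerivAt_pow k y).const_mul (a k)
  have hg' : ∀ (k : ℕ) (y : ℝ), y ∈ t →
      ‖a k * ((k : ℝ) * y ^ (k - 1))‖ ≤ a k * ((k : ℝ) * r ^ (k - 1)) := by
    intro k y hy
    have hay : 0 ≤ a k := a_nonneg hlam k
    rw [norm_mul, norm_mul, Real.norm_of_nonneg hay, Real.norm_of_nonneg (Nat.cast_nonneg k),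
      norm_pow]
    have hyr : ‖y‖ ≤ r := by
      rw [Real.norm_eq_abs, abs_le]
      exact ⟨hy.1.le, hy.2.le⟩
    have hp : ‖y‖ ^ (k - 1) ≤ r ^ (k - 1) := pow_le_pow_left₀ (norm_nonneg y) hyr _
    exact mul_le_mul_of_nonneg_left (mul_le_mul_of_nonneg_left hp (Nat.cast_nonneg k)) hay
  have hu : Summable (fun k : ℕ => a k * ((k : ℝ) * r ^ (k - 1))) := summable_u hlam hr0.le hr1
  have hsum0 : Summable (fun k : ℕ => a k * (0:ℝ) ^ k) := by
    apply summable_of_ne_finset_zero (s := {0})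
    intro k hk
    have : k ≠ 0 := by simpa using hk
    simp [zero_pow this]
  have h0t : (0:ℝ) ∈ t := ⟨by linarith, hr0⟩
  set F : ℝ → ℝ := fun y => ∑' k : ℕ, a k * y ^ k with hF
  set D : ℝ → ℝ := fun y => ∑' k : ℕ, a k * ((k : ℝ) * y ^ (k - 1)) with hD
  have hFderiv : ∀ y ∈ t, HasDerivAt F (D y) y := fun y hy =>
    hasDerivAt_tsum_of_isPreconnected hu isOpen_Ioo (convex_Ioo _ _).isPreconnected
      hg hg' h0t hsum0 hy
  -- ODE: (1-y) * D y = lam * F y  for y ∈ [0, x]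
  have hODE : ∀ y : ℝ, 0 ≤ y → y ≤ x → (1 - y) * D y = lam * F y := by
    intro y hy0 hyx
    have hy1 : y < 1 := lt_of_le_of_lt hyx hx1
    have hyt : y ∈ t := ⟨by linarith, by linarith⟩
    have hS1 : Summable (fun k : ℕ => (lam + k) * a k * y ^ k) := by
      have := (summable_master hlam hy0 hy1).mul_left (lam + 1)
      refine this.of_nonneg_of_le (fun k => ?_) (fun k => ?_)
      · have := a_nonneg hlam k; positivity
      · have hle : lam + k ≤ (lam + 1) * ((k : ℝ) + 1) := by
          nlinarith [Nat.cast_nonneg (α := ℝ) k]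
        have h2 : (0:ℝ) ≤ a k * y ^ k := by
          have := a_nonneg hlam k; positivity
        calc (lam + k) * a k * y ^ k = (lam + k) * (a k * y ^ k) := by ring
          _ ≤ (lam + 1) * ((k : ℝ) + 1) * (a k * y ^ k) := mul_le_mul_of_nonneg_right hle h2
          _ = (lam + 1) * (((k : ℝ) + 1) * a k * y ^ k) := by ring
    have hS2 : Summable (fun k : ℕ => (k : ℝ) * a k * y ^ k) := by
      refine hS1.of_nonneg_of_le (fun k => ?_) (fun k => ?_)
      · have := a_nonneg hlam k; positivity
      · have h2 : (0:ℝ) ≤ a k * y ^ k := by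
          have := a_nonneg hlam k; positivity
        calc (k : ℝ) * a k * y ^ k = (k:ℝ) * (a k * y ^ k) := by ring
          _ ≤ (lam + k) * (a k * y ^ k) := by
              apply mul_le_mul_of_nonneg_right _ h2; linarith
          _ = (lam + k) * a k * y ^ k := by ring
    have hkey : ∀ k : ℕ, a (k + 1) * ((k : ℝ) + 1) = (lam + k) * a k := by
      intro k
      have hk1 : ((k : ℝ) + 1) ≠ 0 := by positivity
      have hfk : (k.factorial : ℝ) ≠ 0 := by
        exact_mod_cast (Nat.factorial_pos k).ne'
      simp only [ha, poch_succ, Nat.factorial_succ]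
      push_cast
      field_simp
    have hDsum : Summable (fun k : ℕ => a k * ((k:ℝ) * y ^ (k - 1))) := by
      refine Summable.of_norm_bounded hu (fun k => hg' k y hyt)
    have hDy : D y = ∑' k : ℕ, (lam + k) * a k * y ^ k := by
      rw [hD]
      simp only []
      rw [hDsum.tsum_eq_zero_add]
      simp only [Nat.cast_zero, zero_mul, mul_zero, zero_add]
      congr 1
      funext k
      rw [← hkey k]
      push_cast
      ring
    have hyD : y * D y = ∑' k : ℕ, (k : ℝ) * a k * y ^ k := by
      rw [hS2.tsum_eq_zero_add]
      simp only [Nat.cast_zero, zero_mul, zero_add]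
      rw [hDy, ← tsum_mul_left]
      congr 1
      funext k
      rw [← hkey k]
      push_cast
      ring
    have hsplit : (1 - y) * D y = D y - y * D y := by ring
    rw [hsplit, hyD, hDy, ← hS1.tsum_sub hS2, hF]
    simp only []
    rw [← tsum_mul_left]
    congr 1
    funext k
    ring
  set G : ℝ → ℝ := fun y => F y * (1 - y) ^ lam with hG
  have hGderiv : ∀ y : ℝ, 0 ≤ y → y ≤ x → HasDerivAt G 0 y := by
    intro y h0 hyx
    have hyt : y ∈ t := ⟨by linarith, by linarith⟩
    have hy1 : y < 1 := lt_of_le_of_lt hyx hx1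
    have h1y : (0:ℝ) < 1 - y := by linarith
    have hw1 : HasDerivAt (fun z : ℝ => 1 - z) (-1) y := by
      simpa using (hasDerivAt_id y).const_sub 1
    have hw2 : HasDerivAt (fun z : ℝ => z ^ lam) (lam * (1 - y) ^ (lam - 1)) (1 - y) :=
      Real.hasDerivAt_rpow_const (Or.inl h1y.ne')
    have hw : HasDerivAt (fun z : ℝ => (1 - z) ^ lam) (lam * (1 - y) ^ (lam - 1) * (-1)) y :=
      hw2.comp y hw1
    have hmul := (hFderiv y hyt).mul hw
    have hval : D y * (1 - y) ^ lam + F y * (lam * (1 - y) ^ (lam - 1) * (-1)) = 0 := by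
      have hrw : (1 - y) ^ lam = (1 - y) ^ (lam - 1) * (1 - y) := by
        rw [Real.rpow_sub_one h1y.ne']
        field_simp
      rw [hrw]
      linear_combination ((1 - y) ^ (lam - 1)) * hODE y h0 hyx
    rw [hval] at hmul
    exact hmul
  have hconst : G x = G 0 := by
    have hcont : ContinuousOn G (Icc 0 x) := fun y hy =>
      ((hGderiv y hy.1 hy.2).continuousAt).continuousWithinAt
    exact constant_of_has_deriv_right_zero hcont
      (fun y hy => ((hGderiv y hy.1 hy.2.le).hasDerivWithinAt)) x ⟨hx0, le_refl x⟩
  have hF0 : F 0 = 1 := by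
    rw [hF]
    simp only []
    rw [tsum_eq_single 0 (fun k hk => by simp [zero_pow hk])]
    simp [ha, poch_zero]
  have hG0 : G 0 = 1 := by
    rw [hG]; simp [hF0]
  have hGx : F x * (1 - x) ^ lam = 1 := by
    have h := hconst; rw [hG0] at h; exact h
  have h1x : (0:ℝ) < 1 - x := by linarith
  have hFx : F x = (1 - x) ^ (-lam) := by
    rw [Real.rpow_neg h1x.le]
    have hne : (1 - x) ^ lam ≠ 0 := (Real.rpow_pos_of_pos h1x lam).ne'
    field_simp
    linarith [hGx]
  have hsx : Summable (fun k : ℕ => a k * x ^ k) := summable_b hlam hx0 hx1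
  have hfinal : HasSum (fun k : ℕ => a k * x ^ k) (F x) := hsx.hasSum
  rw [hFx] at hfinal
  exact hfinal



lemma summable_F1 {lam : ℝ} (hlam : 0 < lam) {z : ℝ} (hz : 0 ≤ z) :
    Summable (fun k : ℕ => z ^ k / (poch lam k * (k.factorial : ℝ))) := by
  have hm : 0 < min lam 1 := lt_min hlam one_pos
  refine ((Real.summable_pow_div_factorial z).mul_left (1 / min lam 1)).of_nonneg_of_le
    (fun k => ?_) (fun k => ?_)
  · have := poch_pos hlam k
    have : (0:ℝ) < (k.factorial:ℝ) := by exact_mod_cast Nat.factorial_pos k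
    have := poch_pos hlam k
    positivity
  · have hfk : (0:ℝ) < (k.factorial:ℝ) := by exact_mod_cast Nat.factorial_pos k
    have h1 : min lam 1 * (k.factorial:ℝ) ≤ poch lam k * (k.factorial:ℝ) :=
      mul_le_mul_of_nonneg_right (poch_ge hlam k) hfk.le
    have h2 : (0:ℝ) < min lam 1 * (k.factorial:ℝ) := by positivity
    calc z ^ k / (poch lam k * (k.factorial:ℝ))
        ≤ z ^ k / (min lam 1 * (k.factorial:ℝ)) :=
          div_le_div_of_nonneg_left (pow_nonneg hz k) h2 h1
      _ = 1 / min lam 1 * (z ^ k / (k.factorial:ℝ)) := by field_simp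

/-- gamma-type Lebesgue integral in `ℝ≥0∞` -/
lemma lint_gamma {a r : ℝ} (ha : 0 < a) (hr : 0 < r) :
    ∫⁻ x in Ioi (0:ℝ), ENNReal.ofReal (x ^ (a - 1) * Real.exp (-(r * x))) =
      ENNReal.ofReal ((1 / r) ^ a * Real.Gamma a) := by
  rw [← integral_rpow_mul_exp_neg_mul_Ioi ha hr]
  rw [ofReal_integral_eq_lintegral_ofReal]
  · have : IntegrableOn (fun x : ℝ => x ^ (a - 1) * Real.exp (-r * x ^ (1:ℝ))) (Ioi 0) :=
      integrableOn_rpow_mul_exp_neg_mul_rpow (by linarith) one_pos hr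
    refine this.congr_fun (fun x hx => ?_) measurableSet_Ioi
    beta_reduce
    rw [Real.rpow_one, neg_mul]
  · rw [EventuallyLE, ae_restrict_iff' measurableSet_Ioi]
    filter_upwards with x hx
    have : (0:ℝ) < x := hx
    positivity


end Stmt9Aux

open Stmt9Aux

/-- The Laplace transform of the infinitely divisible bivariate gamma density
`f(x₁,x₂) = p₁₂^{-λ}/Γ(λ)² e^{-(p₂/p₁₂)x₁-(p₁/p₁₂)x₂} (x₁x₂)^{λ-1} F₁(λ; c x₁x₂)`
on `(0,∞)²`, where `c = (p₁p₂-p₁₂)/p₁₂² > 0` and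
`F₁(λ;z) = ∑_{k≥0} z^k/((λ)_k k!)`, is `(1+p₁θ₁+p₂θ₂+p₁₂θ₁θ₂)^{-λ}`
for `θ₁, θ₂ ≥ 0`. -/
theorem stmt_9 (lam p1 p2 p12 : ℝ) (hlam : 0 < lam) (h1 : 0 < p1) (h2 : 0 < p2)
    (h12 : 0 < p12) (c : ℝ) (hc : c = (p1 * p2 - p12) / p12 ^ 2) (hcpos : 0 < c)
    (θ1 θ2 : ℝ) (hθ1 : 0 ≤ θ1) (hθ2 : 0 ≤ θ2) :
    ∫ x : ℝ × ℝ in Set.Ioi (0:ℝ) ×ˢ Set.Ioi (0:ℝ),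
        Real.exp (-(θ1 * x.1 + θ2 * x.2)) *
          (p12 ^ (-lam) / (Real.Gamma lam) ^ 2 *
            Real.exp (-(p2 / p12) * x.1 - (p1 / p12) * x.2) *
            (x.1 * x.2) ^ (lam - 1) *
            ∑' k : ℕ, (c * x.1 * x.2) ^ k /
              ((ascPochhammer ℝ k).eval lam * (Nat.factorial k : ℝ)))
      = (1 + p1 * θ1 + p2 * θ2 + p12 * θ1 * θ2) ^ (-lam) := by
  have hGam := Real.Gamma_pos_of_pos hlam
  have hfactpos : ∀ k : ℕ, (0:ℝ) < (Nat.factorial k : ℝ) := fun k => by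
    exact_mod_cast Nat.factorial_pos k
  set A := θ1 + p2 / p12 with hA_def
  set B := θ2 + p1 / p12 with hB_def
  have hA : 0 < A := by rw [hA_def]; positivity
  have hB : 0 < B := by rw [hB_def]; positivity
  set R := 1 + p1 * θ1 + p2 * θ2 + p12 * θ1 * θ2 with hR_def
  have hR : 0 < R := by rw [hR_def]; positivity
  have hABsub : (A * B - c) * p12 = R := by
    rw [hA_def, hB_def, hc, hR_def]; field_simp; ring
  have hAB : 0 < A * B := mul_pos hA hB
  set q := c / (A * B) with hq_def
  have hq0 : 0 < q := div_pos hcpos hAB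
  have hcAB : c < A * B := by nlinarith [hABsub, hR, h12]
  have hq1 : q < 1 := (div_lt_one hAB).2 hcAB
  have hABq : A * B * q = c := by rw [hq_def]; field_simp
  set S : Set (ℝ × ℝ) := Set.Ioi (0:ℝ) ×ˢ Set.Ioi (0:ℝ) with hS_def
  have hSmeas : MeasurableSet S := measurableSet_Ioi.prod measurableSet_Ioi
  set f : ℝ × ℝ → ℝ := fun x =>
      Real.exp (-(θ1 * x.1 + θ2 * x.2)) *
        (p12 ^ (-lam) / (Real.Gamma lam) ^ 2 *
          Real.exp (-(p2 / p12) * x.1 - (p1 / p12) * x.2) *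
          (x.1 * x.2) ^ (lam - 1) *
          ∑' k : ℕ, (c * x.1 * x.2) ^ k /
            ((ascPochhammer ℝ k).eval lam * (Nat.factorial k : ℝ))) with hf_def
  set U : ℕ → ℝ → ℝ := fun k x => x ^ (lam + (k:ℝ) - 1) * Real.exp (-(A * x)) with hU_def
  set V : ℕ → ℝ → ℝ := fun k x => x ^ (lam + (k:ℝ) - 1) * Real.exp (-(B * x)) with hV_def
  set Kc : ℕ → ℝ := fun k =>
      p12 ^ (-lam) / (Real.Gamma lam) ^ 2 * (c ^ k / (poch lam k * (k.factorial : ℝ)))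
    with hKc_def
  have hKc_nonneg : ∀ k, 0 ≤ Kc k := fun k => by
    have := poch_pos hlam k
    have := hfactpos k
    rw [hKc_def]
    positivity
  have hU_nonneg : ∀ (k : ℕ) (x : ℝ), 0 < x → 0 ≤ U k x := fun k x hx => by
    rw [hU_def]; positivity
  have hV_nonneg : ∀ (k : ℕ) (x : ℝ), 0 < x → 0 ≤ V k x := fun k x hx => by
    rw [hV_def]; positivity
  set Φ : ℕ → ℝ × ℝ → ℝ≥0∞ := fun k x =>
      ENNReal.ofReal (Kc k) * ENNReal.ofReal (U k x.1) * ENNReal.ofReal (V k x.2) with hΦ_def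
  have hUmeas : ∀ k : ℕ, Measurable fun x : ℝ => ENNReal.ofReal (U k x) := by
    intro k; rw [hU_def]; fun_prop
  have hVmeas : ∀ k : ℕ, Measurable fun x : ℝ => ENNReal.ofReal (V k x) := by
    intro k; rw [hV_def]; fun_prop
  have hΦmeas : ∀ k : ℕ, Measurable (Φ k) := by
    intro k
    rw [hΦ_def]
    exact (measurable_const.mul ((hUmeas k).comp measurable_fst)).mul
      ((hVmeas k).comp measurable_snd)
  -- per-term algebraic identity
  have hterm : ∀ (k : ℕ) (x1 x2 : ℝ), 0 < x1 → 0 < x2 →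
      Real.exp (-(θ1 * x1 + θ2 * x2)) *
        (p12 ^ (-lam) / (Real.Gamma lam) ^ 2 *
          Real.exp (-(p2 / p12) * x1 - (p1 / p12) * x2) * (x1 * x2) ^ (lam - 1)) *
        ((c * x1 * x2) ^ k / ((ascPochhammer ℝ k).eval lam * (Nat.factorial k : ℝ)))
      = Kc k * U k x1 * V k x2 := by
    intro k x1 x2 h1x h2x
    rw [hKc_def, hU_def, hV_def]
    simp only []
    have e1 : x1 ^ (lam + (k:ℝ) - 1) = x1 ^ (lam - 1) * x1 ^ k := by
      rw [show lam + (k:ℝ) - 1 = (lam - 1) + k by ring, Real.rpow_add h1x, Real.rpow_natCast]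
    have e2 : x2 ^ (lam + (k:ℝ) - 1) = x2 ^ (lam - 1) * x2 ^ k := by
      rw [show lam + (k:ℝ) - 1 = (lam - 1) + k by ring, Real.rpow_add h2x, Real.rpow_natCast]
    have e3 : (x1 * x2) ^ (lam - 1) = x1 ^ (lam - 1) * x2 ^ (lam - 1) :=
      Real.mul_rpow h1x.le h2x.le
    have e4 : Real.exp (-(θ1 * x1 + θ2 * x2)) * Real.exp (-(p2 / p12) * x1 - (p1 / p12) * x2)
        = Real.exp (-(A * x1)) * Real.exp (-(B * x2)) := by
      rw [← Real.exp_add, ← Real.exp_add]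
      congr 1
      rw [hA_def, hB_def]
      field_simp
      ring
    have hpoch : (ascPochhammer ℝ k).eval lam = poch lam k := rfl
    rw [hpoch, e1, e2, e3, mul_pow, mul_pow]
    linear_combination (p12 ^ (-lam) / (Real.Gamma lam) ^ 2 * (x1 ^ (lam - 1) * x2 ^ (lam - 1)) *
      (c ^ k * x1 ^ k * x2 ^ k) / (poch lam k * (Nat.factorial k : ℝ))) * e4
  -- pointwise real series expansion
  have hptReal : ∀ x : ℝ × ℝ, x ∈ S → f x = ∑' k : ℕ, Kc k * U k x.1 * V k x.2 := by
    intro x hx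
    have h1x : 0 < x.1 := hx.1
    have h2x : 0 < x.2 := hx.2
    rw [hf_def]
    simp only []
    calc Real.exp (-(θ1 * x.1 + θ2 * x.2)) *
          (p12 ^ (-lam) / (Real.Gamma lam) ^ 2 *
            Real.exp (-(p2 / p12) * x.1 - (p1 / p12) * x.2) *
            (x.1 * x.2) ^ (lam - 1) *
            ∑' k : ℕ, (c * x.1 * x.2) ^ k /
              ((ascPochhammer ℝ k).eval lam * (Nat.factorial k : ℝ)))
        = Real.exp (-(θ1 * x.1 + θ2 * x.2)) *
            (p12 ^ (-lam) / (Real.Gamma lam) ^ 2 *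
              Real.exp (-(p2 / p12) * x.1 - (p1 / p12) * x.2) *
              (x.1 * x.2) ^ (lam - 1)) *
            ∑' k : ℕ, (c * x.1 * x.2) ^ k /
              ((ascPochhammer ℝ k).eval lam * (Nat.factorial k : ℝ)) := by ring
      _ = ∑' k : ℕ, Real.exp (-(θ1 * x.1 + θ2 * x.2)) *
            (p12 ^ (-lam) / (Real.Gamma lam) ^ 2 *
              Real.exp (-(p2 / p12) * x.1 - (p1 / p12) * x.2) *
              (x.1 * x.2) ^ (lam - 1)) *
            ((c * x.1 * x.2) ^ k /
              ((ascPochhammer ℝ k).eval lam * (Nat.factorial k : ℝ))) := by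
          rw [← tsum_mul_left]
      _ = ∑' k : ℕ, Kc k * U k x.1 * V k x.2 :=
          tsum_congr fun k => hterm k x.1 x.2 h1x h2x
  have hsum_w : ∀ x : ℝ × ℝ, x ∈ S → Summable fun k : ℕ => Kc k * U k x.1 * V k x.2 := by
    intro x hx
    have h1x : 0 < x.1 := hx.1
    have h2x : 0 < x.2 := hx.2
    have hz : 0 ≤ c * x.1 * x.2 := by positivity
    have hsf := (summable_F1 hlam hz).mul_left
      (Real.exp (-(θ1 * x.1 + θ2 * x.2)) *
        (p12 ^ (-lam) / (Real.Gamma lam) ^ 2 *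
          Real.exp (-(p2 / p12) * x.1 - (p1 / p12) * x.2) * (x.1 * x.2) ^ (lam - 1)))
    exact hsf.congr fun k => hterm k x.1 x.2 h1x h2x
  have hw_nonneg : ∀ (x : ℝ × ℝ), x ∈ S → ∀ k : ℕ, 0 ≤ Kc k * U k x.1 * V k x.2 := by
    intro x hx k
    exact mul_nonneg (mul_nonneg (hKc_nonneg k) (hU_nonneg k x.1 hx.1)) (hV_nonneg k x.2 hx.2)
  have hpt : ∀ x : ℝ × ℝ, x ∈ S → ENNReal.ofReal (f x) = ∑' k : ℕ, Φ k x := by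
    intro x hx
    rw [hptReal x hx, ENNReal.ofReal_tsum_of_nonneg (hw_nonneg x hx) (hsum_w x hx)]
    refine tsum_congr fun k => ?_
    rw [hΦ_def]
    simp only []
    rw [ENNReal.ofReal_mul (mul_nonneg (hKc_nonneg k) (hU_nonneg k x.1 hx.1)),
      ENNReal.ofReal_mul (hKc_nonneg k)]
  have hf_nonneg : ∀ x : ℝ × ℝ, x ∈ S → 0 ≤ f x := by
    intro x hx
    rw [hptReal x hx]
    exact tsum_nonneg (hw_nonneg x hx)
  have hnn : 0 ≤ᵐ[volume.restrict S] f := by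
    filter_upwards [ae_restrict_mem hSmeas] with x hx
    exact hf_nonneg x hx
  have hmeas : AEStronglyMeasurable f (volume.restrict S) := by
    have hM : Measurable fun x : ℝ × ℝ => (∑' k : ℕ, Φ k x).toReal :=
      (Measurable.ennreal_tsum fun k => hΦmeas k).ennreal_toReal
    refine hM.aestronglyMeasurable.congr ?_
    filter_upwards [ae_restrict_mem hSmeas] with x hx
    rw [← hpt x hx, ENNReal.toReal_ofReal (hf_nonneg x hx)]
  rw [MeasureTheory.integral_eq_lintegral_of_nonneg_ae hnn hmeas]
  -- gamma integrals
  have hUint : ∀ k : ℕ, ∫⁻ x in Set.Ioi (0:ℝ), ENNReal.ofReal (U k x)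
      = ENNReal.ofReal ((1 / A) ^ (lam + (k:ℝ)) * Real.Gamma (lam + (k:ℝ))) := by
    intro k
    rw [hU_def]
    exact lint_gamma (by positivity) hA
  have hVint : ∀ k : ℕ, ∫⁻ x in Set.Ioi (0:ℝ), ENNReal.ofReal (V k x)
      = ENNReal.ofReal ((1 / B) ^ (lam + (k:ℝ)) * Real.Gamma (lam + (k:ℝ))) := by
    intro k
    rw [hV_def]
    exact lint_gamma (by positivity) hB
  have hIA_nonneg : ∀ k : ℕ, 0 ≤ (1 / A) ^ (lam + (k:ℝ)) * Real.Gamma (lam + (k:ℝ)) := by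
    intro k
    have : (0:ℝ) < lam + (k:ℝ) := by positivity
    have := Real.Gamma_pos_of_pos this
    positivity
  have hIB_nonneg : ∀ k : ℕ, 0 ≤ (1 / B) ^ (lam + (k:ℝ)) * Real.Gamma (lam + (k:ℝ)) := by
    intro k
    have : (0:ℝ) < lam + (k:ℝ) := by positivity
    have := Real.Gamma_pos_of_pos this
    positivity
  set wr : ℕ → ℝ := fun k =>
      Kc k * ((1 / B) ^ (lam + (k:ℝ)) * Real.Gamma (lam + (k:ℝ))) *
        ((1 / A) ^ (lam + (k:ℝ)) * Real.Gamma (lam + (k:ℝ))) with hwr_def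
  have hwr_nonneg : ∀ k, 0 ≤ wr k := fun k => by
    rw [hwr_def]
    exact mul_nonneg (mul_nonneg (hKc_nonneg k) (hIB_nonneg k)) (hIA_nonneg k)
  -- per-k double integral
  have hint : ∀ k : ℕ, (∫⁻ x in S, Φ k x) = ENNReal.ofReal (wr k) := by
    intro k
    rw [hS_def, Measure.volume_eq_prod ℝ ℝ, ← Measure.prod_restrict,
      MeasureTheory.lintegral_prod _ ((hΦmeas k).aemeasurable)]
    have step1 : ∀ x1 : ℝ, (∫⁻ x2 in Set.Ioi (0:ℝ), Φ k (x1, x2))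
        = (ENNReal.ofReal (Kc k) * ENNReal.ofReal (U k x1)) *
          ENNReal.ofReal ((1 / B) ^ (lam + (k:ℝ)) * Real.Gamma (lam + (k:ℝ))) := by
      intro x1
      rw [hΦ_def]
      simp only []
      rw [lintegral_const_mul' _ _ (ENNReal.mul_ne_top ENNReal.ofReal_ne_top
        ENNReal.ofReal_ne_top), hVint k]
    calc (∫⁻ x1 in Set.Ioi (0:ℝ), ∫⁻ x2 in Set.Ioi (0:ℝ), Φ k (x1, x2))
        = ∫⁻ x1 in Set.Ioi (0:ℝ),
            (ENNReal.ofReal (Kc k) *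
              ENNReal.ofReal ((1 / B) ^ (lam + (k:ℝ)) * Real.Gamma (lam + (k:ℝ)))) *
            ENNReal.ofReal (U k x1) := by
          refine lintegral_congr fun x1 => ?_
          rw [step1 x1]
          ring
      _ = (ENNReal.ofReal (Kc k) *
            ENNReal.ofReal ((1 / B) ^ (lam + (k:ℝ)) * Real.Gamma (lam + (k:ℝ)))) *
          ENNReal.ofReal ((1 / A) ^ (lam + (k:ℝ)) * Real.Gamma (lam + (k:ℝ))) := by
          rw [lintegral_const_mul' _ _ (ENNReal.mul_ne_top ENNReal.ofReal_ne_top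
            ENNReal.ofReal_ne_top), hUint k]
      _ = ENNReal.ofReal (wr k) := by
          rw [hwr_def]
          simp only []
          rw [ENNReal.ofReal_mul (mul_nonneg (hKc_nonneg k) (hIB_nonneg k)),
            ENNReal.ofReal_mul (hKc_nonneg k)]
  -- the series in closed form
  have hwform : ∀ k : ℕ, wr k =
      (p12 ^ (-lam) * ((1 / A) ^ lam * (1 / B) ^ lam)) *
        (poch lam k / (k.factorial : ℝ) * q ^ k) := by
    intro k
    rw [hwr_def, hKc_def]
    simp only []
    rw [Gamma_poch hlam k]
    have hrA : (1 / A : ℝ) ^ (lam + (k:ℝ)) = (1 / A) ^ lam * (1 / A) ^ (k:ℕ) := by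
      rw [Real.rpow_add (by positivity), Real.rpow_natCast]
    have hrB : (1 / B : ℝ) ^ (lam + (k:ℝ)) = (1 / B) ^ lam * (1 / B) ^ (k:ℕ) := by
      rw [Real.rpow_add (by positivity), Real.rpow_natCast]
    have hqk : q ^ k = c ^ k * ((1 / A) ^ k * (1 / B) ^ k) := by
      rw [hq_def, div_pow, mul_pow, one_div, one_div, inv_pow, inv_pow]
      ring
    rw [hrA, hrB, hqk]
    have hPk := (poch_pos hlam k).ne'
    have hfk := (hfactpos k).ne'
    field_simp
  have hHS : HasSum wr ((p12 ^ (-lam) * ((1 / A) ^ lam * (1 / B) ^ lam)) * (1 - q) ^ (-lam)) := by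
    have h := (hasSum_binomial hlam hq0.le hq1).mul_left
      (p12 ^ (-lam) * ((1 / A) ^ lam * (1 / B) ^ lam))
    rw [show (fun k : ℕ => (p12 ^ (-lam) * ((1 / A) ^ lam * (1 / B) ^ lam)) *
        (poch lam k / (k.factorial : ℝ) * q ^ k)) = wr from funext fun k => (hwform k).symm] at h
    exact h
  have h1q : 0 < 1 - q := by linarith
  have hwr_tsum : ∑' k : ℕ, wr k = R ^ (-lam) := by
    rw [hHS.tsum_eq]
    have hprod : p12 * (A * (B * (1 - q))) = R := by
      linear_combination hABsub - p12 * hABq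
    rw [← hprod, Real.mul_rpow h12.le (by positivity),
      Real.mul_rpow hA.le (by positivity), Real.mul_rpow hB.le h1q.le]
    have hA' : (1 / A : ℝ) ^ lam = A ^ (-lam) := by
      rw [Real.rpow_neg hA.le, one_div, ← Real.inv_rpow hA.le]
    have hB' : (1 / B : ℝ) ^ lam = B ^ (-lam) := by
      rw [Real.rpow_neg hB.le, one_div, ← Real.inv_rpow hB.le]
    rw [hA', hB']
    ring
  -- final computation
  have hlint : (∫⁻ x in S, ENNReal.ofReal (f x)) = ENNReal.ofReal (R ^ (-lam)) := by
    calc (∫⁻ x in S, ENNReal.ofReal (f x)) = ∫⁻ x in S, ∑' k : ℕ, Φ k x :=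
        setLIntegral_congr_fun hSmeas (fun x hx => hpt x hx)
      _ = ∑' k : ℕ, ∫⁻ x in S, Φ k x :=
        lintegral_tsum fun k => (hΦmeas k).aemeasurable
      _ = ∑' k : ℕ, ENNReal.ofReal (wr k) := tsum_congr fun k => hint k
      _ = ENNReal.ofReal (∑' k : ℕ, wr k) :=
        (ENNReal.ofReal_tsum_of_nonneg hwr_nonneg hHS.summable).symm
      _ = ENNReal.ofReal (R ^ (-lam)) := by rw [hwr_tsum]
  rw [hlint, ENNReal.toReal_ofReal (Real.rpow_nonneg hR.le _)]
end

section
/- Theorem 14 of Bernardoff (2023), reproved: Let p₁,p₂,p₁₂>0 with b̃₁₂=(p₁p₂−p₁₂)/p₁₂²>0. Let X₁~Gamma(p₁,λ); given X₁=x₁, let V₁~Poisson((p₁₂/p₁)·b̃₁₂·x₁); given V₁=v, let X₂~Gamma(p₁₂/p₁, λ+v). Then the joint Laplace transform of (X₁,X₂) is E[e^{−θ₁X₁−θ₂X₂}] = (1+p₁θ₁+p₂θ₂+p₁₂θ₁θ₂)^{−λ} for θ₁,θ₂≥0. -/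
lemma tsum_pow_div_factorial_eq_exp (y : ℝ) :
    ∑' v : ℕ, y ^ v / (Nat.factorial v : ℝ) = Real.exp y := by
  rw [Real.exp_eq_exp_ℝ, NormedSpace.exp_eq_tsum_div]

/-- Theorem 14 of Bernardoff (2023): let `p₁,p₂,p₁₂ > 0` with
`b̃₁₂ = (p₁p₂ − p₁₂)/p₁₂² > 0`.  Let `X₁ ~ Gamma(p₁,λ)`; given `X₁ = x₁`,
`V₁ ~ Poisson((p₁₂/p₁) b̃₁₂ x₁)`; given `V₁ = v`, `X₂ ~ Gamma(p₁₂/p₁, λ+v)`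
(with Laplace transform `(1+(p₁₂/p₁)θ₂)^{-(λ+v)}`).  Then the joint Laplace
transform of `(X₁,X₂)`, computed below by the tower property, equals
`(1+p₁θ₁+p₂θ₂+p₁₂θ₁θ₂)^{-λ}` for `θ₁,θ₂ ≥ 0`. -/
theorem stmt_13 (lam p1 p2 p12 : ℝ) (hlam : 0 < lam) (h1 : 0 < p1) (h2 : 0 < p2)
    (h12 : 0 < p12) (b : ℝ) (hb : b = (p1 * p2 - p12) / p12 ^ 2) (hbpos : 0 < b)
    (θ1 θ2 : ℝ) (hθ1 : 0 ≤ θ1) (hθ2 : 0 ≤ θ2) :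
    ∫ x in Set.Ioi (0:ℝ),
        (x ^ (lam - 1) * p1 ^ (-lam) / Real.Gamma lam * Real.exp (-x / p1)) *
          Real.exp (-θ1 * x) *
          ∑' v : ℕ, (((p12 / p1) * b * x) ^ v / (Nat.factorial v : ℝ) *
              Real.exp (-((p12 / p1) * b * x))) *
            (1 + (p12 / p1) * θ2) ^ (-(lam + (v : ℝ)))
      = (1 + p1 * θ1 + p2 * θ2 + p12 * θ1 * θ2) ^ (-lam) := by
  set c : ℝ := p12 / p1 with hc
  have hcpos : 0 < c := div_pos h12 h1
  set s : ℝ := 1 + c * θ2 with hs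
  have hs1 : (1:ℝ) ≤ s := by nlinarith [mul_nonneg hcpos.le hθ2]
  have hspos : 0 < s := by linarith
  set r : ℝ := 1 / p1 + θ1 + c * b - c * b / s with hr
  have hrpos : 0 < r := by
    rw [hr]
    have h1' : c * b / s ≤ c * b := div_le_self (by positivity) hs1
    have h2' : 0 < 1 / p1 := by positivity
    linarith
  have hΓ : 0 < Real.Gamma lam := Real.Gamma_pos_of_pos hlam
  have key : ∀ x ∈ Set.Ioi (0:ℝ),
      (x ^ (lam - 1) * p1 ^ (-lam) / Real.Gamma lam * Real.exp (-x / p1)) *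
        Real.exp (-θ1 * x) *
        ∑' v : ℕ, ((c * b * x) ^ v / (Nat.factorial v : ℝ) *
            Real.exp (-(c * b * x))) * s ^ (-(lam + (v : ℝ)))
      = (p1 ^ (-lam) * s ^ (-lam) / Real.Gamma lam) *
          (x ^ (lam - 1) * Real.exp (-(r * x))) := by
    intro x hx
    have hsum : ∑' v : ℕ, ((c * b * x) ^ v / (Nat.factorial v : ℝ) *
        Real.exp (-(c * b * x))) * s ^ (-(lam + (v : ℝ)))
        = s ^ (-lam) * Real.exp (-(c * b * x)) * Real.exp (c * b * x / s) := by
      have hterm : ∀ v : ℕ, ((c * b * x) ^ v / (Nat.factorial v : ℝ) *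
          Real.exp (-(c * b * x))) * s ^ (-(lam + (v : ℝ)))
          = (s ^ (-lam) * Real.exp (-(c * b * x))) *
            ((c * b * x / s) ^ v / (Nat.factorial v : ℝ)) := by
        intro v
        have : s ^ (-(lam + (v : ℝ))) = s ^ (-lam) * (s ^ v)⁻¹ := by
          rw [neg_add, Real.rpow_add hspos, Real.rpow_neg hspos.le (v : ℝ),
            Real.rpow_natCast]
        rw [this, div_pow, div_div]
        field_simp
      simp_rw [hterm]
      rw [tsum_mul_left, tsum_pow_div_factorial_eq_exp]
    rw [hsum]
    have : Real.exp (-x / p1) * Real.exp (-θ1 * x) *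
        (Real.exp (-(c * b * x)) * Real.exp (c * b * x / s)) = Real.exp (-(r * x)) := by
      rw [← Real.exp_add, ← Real.exp_add, ← Real.exp_add]
      congr 1
      rw [hr]
      field_simp
      ring
    calc (x ^ (lam - 1) * p1 ^ (-lam) / Real.Gamma lam * Real.exp (-x / p1)) *
        Real.exp (-θ1 * x) *
        (s ^ (-lam) * Real.exp (-(c * b * x)) * Real.exp (c * b * x / s))
        = (p1 ^ (-lam) * s ^ (-lam) / Real.Gamma lam) * (x ^ (lam - 1) *
            (Real.exp (-x / p1) * Real.exp (-θ1 * x) *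
              (Real.exp (-(c * b * x)) * Real.exp (c * b * x / s)))) := by ring
      _ = _ := by rw [this]
  rw [MeasureTheory.setIntegral_congr_fun measurableSet_Ioi key,
    MeasureTheory.integral_const_mul,
    Real.integral_rpow_mul_exp_neg_mul_Ioi hlam hrpos]
  have hbase : p1 * s * r = 1 + p1 * θ1 + p2 * θ2 + p12 * θ1 * θ2 := by
    rw [hr, hs, hb, hc]
    have hp1 : p1 ≠ 0 := h1.ne'
    have hp12 : p12 ≠ 0 := h12.ne'
    have hsne : (1 : ℝ) + p12 / p1 * θ2 ≠ 0 := by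
      have : (0:ℝ) < 1 + p12 / p1 * θ2 := by positivity
      exact this.ne'
    field_simp
    ring
  have h1div : (1 / r) ^ lam = r ^ (-lam) := by
    rw [one_div, Real.inv_rpow hrpos.le, ← Real.rpow_neg hrpos.le]
  rw [h1div]
  have hcancel : p1 ^ (-lam) * s ^ (-lam) / Real.Gamma lam * (r ^ (-lam) * Real.Gamma lam)
      = p1 ^ (-lam) * s ^ (-lam) * r ^ (-lam) := by
    field_simp
  rw [hcancel, ← Real.mul_rpow h1.le hspos.le,
    ← Real.mul_rpow (by positivity) hrpos.le, hbase]
end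

section
/- In the bivariate case, the conditional Laplace transform of X₂ given X₁=x₁ for (X₁,X₂) ~ γ_{(P₂,λ)} with P₂(θ₁,θ₂)=1+p₁θ₁+p₂θ₂+p₁₂θ₁θ₂ (p₁,p₂,p₁₂>0, b̃₁₂>0) is L(θ₂) = S₂(θ₂)^{−λ} · exp{ (b̃₁₂/(−p̃₂))·x₁·(S₂(θ₂)^{−1} − 1) }, where S₂(θ₂)=1+(p₁₂/p₁)θ₂, p̃₂=−p₁/p₁₂ and b̃₁₂=(p₁p₂−p₁₂)/p₁₂². -/
open MeasureTheory Set

lemma gamma_asc (lam : ℝ) (hlam : 0 < lam) (k : ℕ) :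
    Real.Gamma (lam + k) = (ascPochhammer ℝ k).eval lam * Real.Gamma lam := by
  induction k with
  | zero => simp
  | succ n ih =>
    have h : lam + ((n : ℕ) + 1 : ℕ) = (lam + n) + 1 := by push_cast; ring
    rw [h, Real.Gamma_add_one (by positivity : (0:ℝ) < lam + n).ne', ih,
      ascPochhammer_succ_eval]
    ring

lemma myIntegrableOn (a r : ℝ) (ha : 0 < a) (hr : 0 < r) :
    IntegrableOn (fun x : ℝ => x ^ (a - 1) * Real.exp (-(r * x))) (Set.Ioi 0) := by
  have h := integrableOn_rpow_mul_exp_neg_mul_rpow (s := a - 1) (p := 1) (b := r)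
    (by linarith) zero_lt_one hr
  refine h.congr_fun (fun x hx => ?_) measurableSet_Ioi
  simp only [Real.rpow_one, neg_mul]

/-- The conditional Laplace transform of `X₂` given `X₁ = x₁` for
`(X₁,X₂) ~ γ_{(P₂,λ)}` (whose joint density on `(0,∞)²` is
`f(x₁,x₂) = p₁₂^{-λ}/Γ(λ)² e^{-(p₂/p₁₂)x₁-(p₁/p₁₂)x₂}(x₁x₂)^{λ-1}F₁(λ;b̃₁₂x₁x₂)`)
is `L(θ₂) = S₂(θ₂)^{-λ} exp{(b̃₁₂/(−p̃₂)) x₁ (S₂(θ₂)^{-1} − 1)}` with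
`S₂(θ₂) = 1 + (p₁₂/p₁)θ₂` and `b̃₁₂/(−p̃₂) = (p₁₂/p₁) b̃₁₂`:  equivalently,
`∫₀^∞ e^{-θ₂x₂} f(x₁,x₂) dx₂` equals the Gamma(p₁,λ) density of `X₁` at `x₁`
times `L(θ₂)`. -/
theorem stmt_14 (lam p1 p2 p12 : ℝ) (hlam : 0 < lam) (h1 : 0 < p1) (h2 : 0 < p2)
    (h12 : 0 < p12) (b : ℝ) (hb : b = (p1 * p2 - p12) / p12 ^ 2) (hbpos : 0 < b)
    (x1 : ℝ) (hx1 : 0 < x1) (θ2 : ℝ) (hθ2 : 0 ≤ θ2) :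
    ∫ x2 in Set.Ioi (0:ℝ),
        Real.exp (-θ2 * x2) *
          (p12 ^ (-lam) / (Real.Gamma lam) ^ 2 *
            Real.exp (-(p2 / p12) * x1 - (p1 / p12) * x2) *
            (x1 * x2) ^ (lam - 1) *
            ∑' k : ℕ, (b * x1 * x2) ^ k /
              ((ascPochhammer ℝ k).eval lam * (Nat.factorial k : ℝ)))
      = (x1 ^ (lam - 1) * p1 ^ (-lam) / Real.Gamma lam * Real.exp (-x1 / p1)) *
          ((1 + (p12 / p1) * θ2) ^ (-lam) *
            Real.exp ((p12 / p1) * b * x1 * ((1 + (p12 / p1) * θ2)⁻¹ - 1))) := by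
  have hG : 0 < Real.Gamma lam := Real.Gamma_pos_of_pos hlam
  set s : ℝ := θ2 + p1 / p12 with hsdef
  have hs : 0 < s := by positivity
  set C : ℝ := p12 ^ (-lam) / (Real.Gamma lam) ^ 2 with hCdef
  set K : ℝ := C * Real.exp (-(p2 / p12) * x1) * x1 ^ (lam - 1) with hKdef
  have hK : 0 ≤ K := by
    have : (0:ℝ) ≤ C := by positivity
    positivity
  set D : ℕ → ℝ := fun k => (ascPochhammer ℝ k).eval lam * (Nat.factorial k : ℝ) with hDdef
  have hD : ∀ k, 0 < D k := fun k =>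
    mul_pos (ascPochhammer_pos k lam hlam) (by exact_mod_cast Nat.factorial_pos k)
  set c : ℕ → ℝ := fun k => K * (b * x1) ^ k / D k with hcdef
  have hc : ∀ k, 0 ≤ c k := fun k => by
    apply div_nonneg _ (hD k).le
    positivity
  set F : ℕ → ℝ → ℝ := fun k x2 => c k * (x2 ^ (lam + k - 1) * Real.exp (-(s * x2)))
    with hFdef
  set E : ℝ := K * Real.Gamma lam * (1 / s) ^ lam with hEdef
  -- pointwise rewriting of the integrand
  have hpt : ∀ x2 ∈ Ioi (0:ℝ),
      Real.exp (-θ2 * x2) *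
          (C * Real.exp (-(p2 / p12) * x1 - (p1 / p12) * x2) *
            (x1 * x2) ^ (lam - 1) *
            ∑' k : ℕ, (b * x1 * x2) ^ k / D k)
        = ∑' k : ℕ, F k x2 := by
    intro x2 hx2
    rw [mem_Ioi] at hx2
    rw [← mul_assoc, ← tsum_mul_left]
    refine tsum_congr fun k => ?_
    have h1' : (x1 * x2) ^ (lam - 1) = x1 ^ (lam - 1) * x2 ^ (lam - 1) :=
      Real.mul_rpow hx1.le hx2.le
    have h2' : Real.exp (-θ2 * x2) * Real.exp (-(p2 / p12) * x1 - (p1 / p12) * x2)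
        = Real.exp (-(p2 / p12) * x1) * Real.exp (-(s * x2)) := by
      rw [← Real.exp_add, ← Real.exp_add]
      congr 1
      rw [hsdef]; ring
    have h3' : x2 ^ (lam + k - 1) = x2 ^ (lam - 1) * x2 ^ (k : ℕ) := by
      rw [← Real.rpow_natCast x2 k, ← Real.rpow_add hx2]
      ring_nf
    simp only [hFdef, hcdef, hKdef]
    rw [h3', h1', mul_pow, mul_pow]
    linear_combination (C * (x1 ^ (lam - 1) * x2 ^ (lam - 1)) * (b ^ k * x1 ^ k * x2 ^ k) / D k) * h2'
  have hInt : ∀ k : ℕ, IntegrableOn (F k) (Ioi (0:ℝ)) := by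
    intro k
    have := (myIntegrableOn (lam + k) s (by positivity) hs).const_mul (c k)
    exact this
  have hval : ∀ k : ℕ, (∫ x2 in Ioi (0:ℝ), F k x2) = E * ((b * x1 / s) ^ k / (Nat.factorial k : ℝ)) := by
    intro k
    simp only [hFdef]
    rw [integral_const_mul, Real.integral_rpow_mul_exp_neg_mul_Ioi (by positivity : (0:ℝ) < lam + k) hs,
      Real.rpow_add (by positivity : (0:ℝ) < 1/s), Real.rpow_natCast, gamma_asc lam hlam k]
    have hP := (ascPochhammer_pos k lam hlam).ne'
    have hF := (Nat.cast_pos.mpr (Nat.factorial_pos k) : (0:ℝ) < (Nat.factorial k : ℝ)).ne'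
    simp only [hcdef, hEdef, hDdef]
    rw [div_pow, mul_pow]
    field_simp
    ring
    rw [mul_assoc _ (s ^ k), ← mul_pow, mul_inv_cancel₀ hs.ne', one_pow, mul_one]
  have hnorm : ∀ k : ℕ, (∫ x2 in Ioi (0:ℝ), ‖F k x2‖) = ∫ x2 in Ioi (0:ℝ), F k x2 := by
    intro k
    refine setIntegral_congr_fun measurableSet_Ioi fun x2 hx2 => ?_
    rw [mem_Ioi] at hx2
    apply Real.norm_of_nonneg
    have : (0:ℝ) ≤ x2 ^ (lam + k - 1) := Real.rpow_nonneg hx2.le _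
    have := hc k
    positivity
  have hsum : Summable fun k : ℕ => ∫ x2 in Ioi (0:ℝ), ‖F k x2‖ := by
    simp_rw [hnorm, hval]
    exact (Real.summable_pow_div_factorial (b * x1 / s)).mul_left E
  calc
    ∫ x2 in Set.Ioi (0:ℝ),
        Real.exp (-θ2 * x2) *
          (C * Real.exp (-(p2 / p12) * x1 - (p1 / p12) * x2) *
            (x1 * x2) ^ (lam - 1) *
            ∑' k : ℕ, (b * x1 * x2) ^ k / D k)
      = ∫ x2 in Ioi (0:ℝ), ∑' k : ℕ, F k x2 :=
        setIntegral_congr_fun measurableSet_Ioi hpt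
    _ = ∑' k : ℕ, ∫ x2 in Ioi (0:ℝ), F k x2 :=
        (integral_tsum_of_summable_integral_norm hInt hsum).symm
    _ = ∑' k : ℕ, E * ((b * x1 / s) ^ k / (Nat.factorial k : ℝ)) := tsum_congr hval
    _ = E * Real.exp (b * x1 / s) := by
        rw [tsum_mul_left, Real.exp_eq_exp_ℝ, NormedSpace.exp_eq_tsum_div]
    _ = (x1 ^ (lam - 1) * p1 ^ (-lam) / Real.Gamma lam * Real.exp (-x1 / p1)) *
          ((1 + (p12 / p1) * θ2) ^ (-lam) *
            Real.exp ((p12 / p1) * b * x1 * ((1 + (p12 / p1) * θ2)⁻¹ - 1))) := by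
        have hS : 1 + (p12 / p1) * θ2 = (p12 / p1) * s := by
          rw [hsdef]; field_simp; ring
        have hA : ((p12 / p1) * s) ^ (-lam) = (p12 / p1) ^ (-lam) * s ^ (-lam) :=
          Real.mul_rpow (by positivity) hs.le
        have hB : p1 ^ (-lam) * (p12 / p1) ^ (-lam) = p12 ^ (-lam) := by
          rw [← Real.mul_rpow h1.le (by positivity)]
          congr 1
          field_simp
        have hC1 : (1 / s) ^ lam = s ^ (-lam) := by
          rw [one_div, Real.inv_rpow hs.le, ← Real.rpow_neg hs.le]
        have hE2 : Real.exp (-(p2 / p12) * x1) * Real.exp (b * x1 / s)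
            = Real.exp (-x1 / p1) *
              Real.exp ((p12 / p1) * b * x1 * (((p12 / p1) * s)⁻¹ - 1)) := by
          rw [← Real.exp_add, ← Real.exp_add]
          congr 1
          rw [hb, hsdef]
          field_simp
          ring
        rw [hS, hA]
        simp only [hEdef, hKdef, hCdef, hC1]
        linear_combination (norm := (field_simp; ring)) (x1 ^ (lam - 1) * s ^ (-lam) / Real.Gamma lam) *
          (p12 ^ (-lam) * hE2 -
            (Real.exp (-x1 / p1) *
              Real.exp ((p12 / p1) * b * x1 * (((p12 / p1) * s)⁻¹ - 1))) * hB)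
end

section
/- For n=3, the expansion coefficients of [1−R₃(z)]^{−λ} with R₃(z)=b̃₁₂z₁z₂+b̃₁₃z₁z₃+b̃₂₃z₂z₃+b̃₁₂₃z₁z₂z₃ are: the coefficient of z^α (α∈ℕ³) equals Σ_{max(α)≤k≤|α|/2, k∈ℕ} (λ)_k · b̃₁₂^{k−α₃} b̃₁₃^{k−α₂} b̃₂₃^{k−α₁} b̃₁₂₃^{α₁+α₂+α₃−2k} / ((k−α₃)!(k−α₂)!(k−α₁)!(α₁+α₂+α₃−2k)!) when max(α₁,α₂,α₃) ≤ (α₁+α₂+α₃)/2, and equals 0 otherwise (except that the coefficient of z^0 is 1). -/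
open Finset Filter

private lemma asc_succ_eval (lam : ℝ) (k : ℕ) :
    (ascPochhammer ℝ (k + 1)).eval lam = (ascPochhammer ℝ k).eval lam * (lam + k) :=
  ascPochhammer_succ_eval k lam

private lemma asc_pos {lam : ℝ} (h : 0 < lam) : ∀ k, 0 < (ascPochhammer ℝ k).eval lam
  | 0 => by simp
  | (k+1) => by
      rw [asc_succ_eval]
      exact mul_pos (asc_pos h k) (by positivity)

private lemma asc_le {lam : ℝ} (h : 0 < lam) :
    ∀ k, (ascPochhammer ℝ k).eval lam ≤ (lam + 1) ^ k * (k.factorial : ℝ)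
  | 0 => by simp
  | (k+1) => by
      rw [asc_succ_eval, pow_succ, Nat.factorial_succ]
      push_cast
      calc (ascPochhammer ℝ k).eval lam * (lam + k)
          ≤ ((lam + 1) ^ k * k.factorial) * ((lam + 1) * (k + 1)) := by
            apply mul_le_mul (asc_le h k) ?_ (by positivity) (by positivity)
            nlinarith [Nat.cast_nonneg (α := ℝ) k]
        _ = (lam + 1) ^ k * (lam + 1) * ((k + 1) * k.factorial) := by ring

private lemma tendsto_ratio (lam : ℝ) :
    Tendsto (fun k : ℕ => (lam + k) / (k + 1)) atTop (nhds 1) := by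
  have h : ∀ k : ℕ, (lam + k) / ((k : ℝ) + 1) = 1 + (lam - 1) / ((k : ℝ) + 1) := by
    intro k
    rw [one_add_div (by positivity : ((k : ℝ) + 1) ≠ 0)]
    ring_nf
  simp_rw [h]
  have h2 : Tendsto (fun k : ℕ => (lam - 1) / ((k : ℝ) + 1)) atTop (nhds 0) := by
    apply Tendsto.div_atTop tendsto_const_nhds
    exact tendsto_atTop_add_const_right atTop 1 tendsto_natCast_atTop_atTop
  simpa using tendsto_const_nhds.add h2

/-- summability of the binomial series -/
private lemma binom_summable {lam : ℝ} (hlam : 0 < lam) {x : ℝ} (hx : |x| < 1) :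
    Summable (fun k : ℕ => (ascPochhammer ℝ k).eval lam / k.factorial * x ^ k) := by
  rcases eq_or_ne x 0 with rfl | hx0
  · apply summable_of_ne_finset_zero (s := {0})
    intro k hk
    simp only [Finset.mem_singleton] at hk
    simp [zero_pow hk]
  · apply summable_of_ratio_test_tendsto_lt_one hx
      (Eventually.of_forall fun k => by
        have := asc_pos hlam k
        have := Nat.factorial_pos k
        positivity)
    have hratio : ∀ k : ℕ,
        ‖(ascPochhammer ℝ (k+1)).eval lam / (k+1).factorial * x ^ (k+1)‖ /
          ‖(ascPochhammer ℝ k).eval lam / k.factorial * x ^ k‖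
        = (lam + k) / (k + 1) * |x| := by
      intro k
      have h1 : (0:ℝ) < (ascPochhammer ℝ k).eval lam := asc_pos hlam k
      have h2 : (0:ℝ) < k.factorial := by exact_mod_cast Nat.factorial_pos k
      have h3 : (0:ℝ) < lam + k := by positivity
      have h4 : (0:ℝ) < (k:ℝ) + 1 := by positivity
      have h5 : x ^ k ≠ 0 := pow_ne_zero _ hx0
      rw [asc_succ_eval]
      rw [Real.norm_eq_abs, Real.norm_eq_abs, abs_mul, abs_mul, abs_div, abs_div,
        pow_succ, abs_mul]
      rw [Nat.factorial_succ]
      push_cast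
      rw [abs_mul (x ^ k) x, abs_mul ((k:ℝ)+1), abs_of_pos h1, abs_of_pos h2,
        abs_of_pos h3, abs_of_pos h4]
      have h6 : |x ^ k| ≠ 0 := abs_ne_zero.2 h5
      field_simp
    simp_rw [hratio]
    simpa using (tendsto_ratio lam).mul (tendsto_const_nhds (x := |x|))


private noncomputable def bc (lam : ℝ) (k : ℕ) : ℝ :=
  (ascPochhammer ℝ k).eval lam / k.factorial

private lemma bc_zero (lam : ℝ) : bc lam 0 = 1 := by simp [bc]

private lemma bc_pos {lam : ℝ} (h : 0 < lam) (k : ℕ) : 0 < bc lam k := by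
  have := asc_pos h k
  have := Nat.factorial_pos k
  unfold bc
  positivity

private lemma bc_succ (lam : ℝ) (k : ℕ) :
    bc lam (k + 1) = bc lam k * ((lam + k) / (k + 1)) := by
  unfold bc
  rw [asc_succ_eval, Nat.factorial_succ, div_mul_div_comm]
  push_cast
  ring_nf

private lemma bc_succ' (lam : ℝ) (k : ℕ) :
    bc lam (k + 1) * ((k : ℝ) + 1) = bc lam k * (lam + k) := by
  rw [bc_succ, mul_assoc, div_mul_cancel₀ _ (by positivity : ((k : ℝ) + 1) ≠ 0)]

private lemma bc_summable {lam : ℝ} (hlam : 0 < lam) {x : ℝ} (hx : |x| < 1) :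
    Summable (fun k : ℕ => bc lam k * x ^ k) := by
  simpa [bc, div_mul_eq_mul_div, mul_div_assoc] using binom_summable hlam hx

private lemma pow_shift (y : ℝ) : ∀ m : ℕ, y * ((m : ℝ) * y ^ (m - 1)) = (m : ℝ) * y ^ m
  | 0 => by simp
  | (m+1) => by
      simp only [Nat.add_sub_cancel, pow_succ]
      push_cast
      ring

private lemma u_summable {lam : ℝ} (hlam : 0 < lam) {r : ℝ} (hr0 : 0 < r) (hr1 : r < 1) :
    Summable (fun n : ℕ => bc lam n * ((n : ℝ) * r ^ (n - 1))) := by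
  apply summable_of_ratio_test_tendsto_lt_one hr1
  · filter_upwards [eventually_ge_atTop 1] with n hn
    obtain ⟨m, rfl⟩ := Nat.exists_eq_add_of_le hn
    have h1 := (bc_pos hlam (1 + m)).ne'
    have h2 : ((1 + m : ℕ) : ℝ) ≠ 0 := by positivity
    have h3 : r ^ (1 + m - 1) ≠ 0 := (pow_pos hr0 _).ne'
    exact mul_ne_zero h1 (mul_ne_zero h2 h3)
  · have hnice : Tendsto (fun n : ℕ => (1 + lam / ((n : ℝ))) * r) atTop (nhds r) := by
      have h2 : Tendsto (fun n : ℕ => lam / ((n : ℝ))) atTop (nhds 0) :=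
        tendsto_const_div_atTop_nhds_zero_nat lam
      have h3 := (tendsto_const_nhds (x := (1:ℝ)) (f := atTop (α := ℕ))).add h2
      have h4 := h3.mul (tendsto_const_nhds (x := r) (f := atTop (α := ℕ)))
      simpa using h4
    apply Tendsto.congr' ?_ hnice
    filter_upwards [eventually_ge_atTop 1] with n hn
    obtain ⟨m, rfl⟩ := Nat.exists_eq_add_of_le hn
    have hbp := bc_pos hlam (1 + m)
    have hbp1 := bc_pos hlam (1 + m + 1)
    have e1 : (1 : ℕ) + m = m + 1 := by omega
    rw [e1]
    simp only [Nat.add_sub_cancel]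
    have hb1 : (0:ℝ) < bc lam (m + 1) := bc_pos hlam _
    have hb2 : (0:ℝ) < bc lam (m + 1 + 1) := bc_pos hlam _
    have hA : (0:ℝ) < bc lam (m + 1 + 1) * (((m + 1 + 1 : ℕ) : ℝ) * r ^ (m + 1)) := by
      have : (0:ℝ) < ((m + 1 + 1 : ℕ) : ℝ) := by positivity
      have : (0:ℝ) < r ^ (m + 1) := pow_pos hr0 _
      positivity
    have hB : (0:ℝ) < bc lam (m + 1) * (((m + 1 : ℕ) : ℝ) * r ^ m) := by
      have : (0:ℝ) < ((m + 1 : ℕ) : ℝ) := by positivity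
      have : (0:ℝ) < r ^ m := pow_pos hr0 _
      positivity
    rw [Real.norm_eq_abs, Real.norm_eq_abs, abs_of_pos hA, abs_of_pos hB]
    rw [bc_succ lam (m + 1), pow_succ]
    have h1 : bc lam (m + 1) ≠ 0 := hb1.ne'
    have h2 : r ^ m ≠ 0 := (pow_pos hr0 m).ne'
    have h3 : ((m:ℝ) + 1) ≠ 0 := by positivity
    have h4 : ((m:ℝ) + 1 + 1) ≠ 0 := by positivity
    push_cast
    field_simp
    ring


private lemma binom_hasSum {lam : ℝ} (hlam : 0 < lam) {x : ℝ} (hx : |x| < 1) :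
    HasSum (fun k : ℕ => bc lam k * x ^ k) ((1 - x) ^ (-lam)) := by
  have hxa : 0 ≤ |x| := abs_nonneg x
  set r : ℝ := (1 + |x|) / 2 with hrdef
  have hr0 : 0 < r := by positivity
  have hxr : |x| < r := by rw [hrdef]; linarith
  have hr1 : r < 1 := by rw [hrdef]; linarith
  set t : Set ℝ := Metric.ball (0:ℝ) r with htdef
  have ht : IsOpen t := Metric.isOpen_ball
  have htc : Convex ℝ t := convex_ball 0 r
  have hmem : ∀ y : ℝ, y ∈ t ↔ |y| < r := by
    intro y; rw [htdef, Metric.mem_ball, Real.dist_eq, sub_zero]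
  have h0t : (0:ℝ) ∈ t := by rw [hmem]; simpa using hr0
  have hxt : x ∈ t := by rw [hmem]; exact hxr
  have hy1 : ∀ y ∈ t, |y| < 1 := fun y hy => lt_trans ((hmem y).1 hy) hr1
  have h1pos : ∀ y ∈ t, (0:ℝ) < 1 - y := by
    intro y hy
    have := abs_lt.1 (hy1 y hy)
    linarith [this.2]
  set f : ℝ → ℝ := fun y => ∑' n : ℕ, bc lam n * y ^ n with hfdef
  set D : ℝ → ℝ := fun y => ∑' n : ℕ, bc lam n * ((n : ℝ) * y ^ (n - 1)) with hDdef
  have hu : Summable (fun n : ℕ => bc lam n * ((n : ℝ) * r ^ (n - 1))) :=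
    u_summable hlam hr0 hr1
  have hg' : ∀ (n : ℕ), ∀ y ∈ t, ‖bc lam n * ((n : ℝ) * y ^ (n - 1))‖
      ≤ bc lam n * ((n : ℝ) * r ^ (n - 1)) := by
    intro n y hy
    have hb := bc_pos hlam n
    rw [Real.norm_eq_abs, abs_mul, abs_mul, abs_of_pos hb, Nat.abs_cast, abs_pow]
    have : |y| ^ (n - 1) ≤ r ^ (n - 1) :=
      pow_le_pow_left₀ (abs_nonneg y) ((hmem y).1 hy).le _
    gcongr
  have hg0 : Summable (fun n : ℕ => bc lam n * (0:ℝ) ^ n) := by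
    apply summable_of_ne_finset_zero (s := {0})
    intro k hk
    simp only [Finset.mem_singleton] at hk
    simp [zero_pow hk]
  have hf : ∀ y ∈ t, HasDerivAt f (D y) y := by
    intro y hy
    exact hasDerivAt_tsum_of_isPreconnected hu ht htc.isPreconnected
      (fun n z hz => by simpa using (hasDerivAt_pow n z).const_mul (bc lam n))
      hg' h0t hg0 hy
  have hsum : ∀ y ∈ t, Summable (fun n : ℕ => bc lam n * y ^ n) :=
    fun y hy => bc_summable hlam (hy1 y hy)
  have hsumD : ∀ y ∈ t, Summable (fun n : ℕ => bc lam n * ((n : ℝ) * y ^ (n - 1))) :=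
    fun y hy => Summable.of_norm_bounded hu (fun n => hg' n y hy)
  have key : ∀ y ∈ t, (1 - y) * D y = lam * f y := by
    intro y hy
    have h1 : D y = ∑' m : ℕ, bc lam (m + 1) * (((m : ℝ) + 1) * y ^ m) := by
      have e0 : D y = ∑' n : ℕ, bc lam n * ((n : ℝ) * y ^ (n - 1)) := rfl
      rw [e0, Summable.tsum_eq_zero_add (hsumD y hy)]
      push_cast
      simp
    have h2 : ∀ m : ℕ, bc lam (m + 1) * (((m : ℝ) + 1) * y ^ m)
        = lam * (bc lam m * y ^ m) + y * (bc lam m * ((m : ℝ) * y ^ (m - 1))) := by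
      intro m
      have e1 : bc lam (m + 1) * (((m : ℝ) + 1) * y ^ m)
          = (bc lam (m + 1) * ((m : ℝ) + 1)) * y ^ m := by ring
      rw [e1, bc_succ' lam m]
      have e2 := pow_shift y m
      calc bc lam m * (lam + m) * y ^ m
          = lam * (bc lam m * y ^ m) + bc lam m * ((m : ℝ) * y ^ m) := by ring
        _ = lam * (bc lam m * y ^ m) + bc lam m * (y * ((m : ℝ) * y ^ (m - 1))) := by rw [e2]
        _ = lam * (bc lam m * y ^ m) + y * (bc lam m * ((m : ℝ) * y ^ (m - 1))) := by ring
    have hs1 : Summable (fun m : ℕ => lam * (bc lam m * y ^ m)) :=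
      (hsum y hy).mul_left lam
    have hs2 : Summable (fun m : ℕ => y * (bc lam m * ((m : ℝ) * y ^ (m - 1)))) :=
      (hsumD y hy).mul_left y
    have h3 : D y = lam * f y + y * D y := by
      nth_rewrite 1 [h1]
      calc ∑' m : ℕ, bc lam (m + 1) * (((m : ℝ) + 1) * y ^ m)
          = ∑' m : ℕ, (lam * (bc lam m * y ^ m)
              + y * (bc lam m * ((m : ℝ) * y ^ (m - 1)))) := by
            exact tsum_congr h2
        _ = (∑' m : ℕ, lam * (bc lam m * y ^ m))
              + ∑' m : ℕ, y * (bc lam m * ((m : ℝ) * y ^ (m - 1))) := Summable.tsum_add hs1 hs2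
        _ = lam * (∑' m : ℕ, bc lam m * y ^ m)
              + y * ∑' m : ℕ, bc lam m * ((m : ℝ) * y ^ (m - 1)) := by
            rw [tsum_mul_left, tsum_mul_left]
        _ = lam * f y + y * D y := rfl
    linarith [h3]
  set F : ℝ → ℝ := fun y => f y * (1 - y) ^ lam with hFdef
  have hFd : ∀ y ∈ t, HasDerivAt F 0 y := by
    intro y hy
    have h1y : (0:ℝ) < 1 - y := h1pos y hy
    have hrp : HasDerivAt (fun z : ℝ => (1 - z) ^ lam)
        (lam * (1 - y) ^ (lam - 1) * (-1)) y := by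
      have houter : HasDerivAt (fun w : ℝ => w ^ lam)
          (lam * (1 - y) ^ (lam - 1)) (1 - y) :=
        Real.hasDerivAt_rpow_const (Or.inl h1y.ne')
      have hinner : HasDerivAt (fun z : ℝ => 1 - z) (-1) y := by
        simpa using (hasDerivAt_id y).const_sub 1
      exact houter.comp y hinner
    have hprod := (hf y hy).mul hrp
    have hzero : D y * (1 - y) ^ lam + f y * (lam * (1 - y) ^ (lam - 1) * (-1)) = 0 := by
      have hpe : (1 - y) ^ lam = (1 - y) ^ (lam - 1) * (1 - y) := by
        rw [← Real.rpow_add_one h1y.ne' (lam - 1)]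
        ring_nf
      rw [hpe]
      linear_combination ((1:ℝ) - y) ^ (lam - 1) * key y hy
    rw [hzero] at hprod
    exact hprod
  have hconst : F x = F 0 := by
    apply htc.is_const_of_fderivWithin_eq_zero (𝕜 := ℝ)
      (fun y hy => ((hFd y hy).differentiableAt).differentiableWithinAt) ?_ hxt h0t
    intro y hy
    rw [fderivWithin_of_isOpen ht hy]
    have h := (hFd y hy).hasFDerivAt.fderiv
    rw [h]
    refine ContinuousLinearMap.ext fun w => ?_
    simp
  have hf0 : f 0 = 1 := by
    have e0 : f 0 = ∑' n : ℕ, bc lam n * (0:ℝ) ^ n := rfl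
    rw [e0, tsum_eq_single 0 (fun n hn => by simp [zero_pow hn])]
    simp [bc_zero]
  have hF0 : F 0 = 1 := by
    have e0 : F 0 = f 0 * ((1:ℝ) - 0) ^ lam := rfl
    rw [e0, hf0]
    simp
  have h1x : (0:ℝ) < 1 - x := h1pos x hxt
  have hfx : f x = (1 - x) ^ (-lam) := by
    have hFx : f x * (1 - x) ^ lam = 1 := hconst.trans hF0
    have hpow : (0:ℝ) < (1 - x) ^ lam := Real.rpow_pos_of_pos h1x lam
    rw [Real.rpow_neg h1x.le]
    exact eq_inv_of_mul_eq_one_left hFx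
  have hthis := (hsum x hxt).hasSum
  have hfx' : (∑' n : ℕ, bc lam n * x ^ n) = (1 - x) ^ (-lam) := hfx
  rwa [hfx'] at hthis


private lemma choose_le_two_pow' (n a : ℕ) : n.choose a ≤ 2 ^ n := by
  rcases le_or_gt a n with h | h
  · calc n.choose a ≤ ∑ i ∈ Finset.range (n + 1), n.choose i :=
        Finset.single_le_sum (fun i _ => Nat.zero_le _)
          (Finset.mem_range.2 (Nat.lt_succ_of_le h))
    _ = 2 ^ n := Nat.sum_range_choose n
  · rw [Nat.choose_eq_zero_of_lt h]; exact Nat.zero_le _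

private lemma fact_add_le (a b : ℕ) :
    (a + b).factorial ≤ 2 ^ (a + b) * (a.factorial * b.factorial) := by
  have h1 : (a + b).choose a * (a.factorial * b.factorial) = (a + b).factorial := by
    have h := Nat.choose_mul_factorial_mul_factorial (Nat.le_add_right a b)
    rw [Nat.add_sub_cancel_left] at h
    rw [← h]; ring
  calc (a + b).factorial = (a + b).choose a * (a.factorial * b.factorial) := h1.symm
    _ ≤ 2 ^ (a + b) * (a.factorial * b.factorial) :=
        Nat.mul_le_mul_right _ (choose_le_two_pow' _ _)

private lemma fact_four_le (i j l m : ℕ) :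
    (i + j + l + m).factorial
      ≤ 4 ^ (i + j + l + m) * (i.factorial * j.factorial * l.factorial * m.factorial) := by
  have e : i + j + l + m = (i + j) + (l + m) := by omega
  rw [e]
  calc ((i + j) + (l + m)).factorial
      ≤ 2 ^ ((i + j) + (l + m)) * ((i + j).factorial * (l + m).factorial) := fact_add_le _ _
    _ ≤ 2 ^ ((i + j) + (l + m)) *
          ((2 ^ (i + j) * (i.factorial * j.factorial)) *
            (2 ^ (l + m) * (l.factorial * m.factorial))) := by
        exact Nat.mul_le_mul_left _ (Nat.mul_le_mul (fact_add_le i j) (fact_add_le l m))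
    _ = (2 ^ ((i + j) + (l + m)) * (2 ^ (i + j) * 2 ^ (l + m))) *
          (i.factorial * j.factorial * (l.factorial * m.factorial)) := by ring
    _ = 4 ^ ((i + j) + (l + m)) * (i.factorial * j.factorial * l.factorial * m.factorial) := by
        rw [← pow_add, ← Nat.pow_add]
        have h4 : (4 : ℕ) = 2 ^ 2 := rfl
        rw [h4, ← Nat.pow_mul]
        have he : (i + j + (l + m)) + (i + j + (l + m)) = 2 * (i + j + (l + m)) := by omega
        rw [he]
        ring

private def sumIdx (q : ℕ × ℕ × ℕ × ℕ) : ℕ := q.1 + q.2.1 + q.2.2.1 + q.2.2.2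

private def alphaIdx (q : ℕ × ℕ × ℕ × ℕ) : ℕ × ℕ × ℕ :=
  (q.1 + q.2.1 + q.2.2.2, q.1 + q.2.2.1 + q.2.2.2, q.2.1 + q.2.2.1 + q.2.2.2)

private noncomputable def gq (lam t1 t2 t3 t4 : ℝ) (q : ℕ × ℕ × ℕ × ℕ) : ℝ :=
  (ascPochhammer ℝ (sumIdx q)).eval lam * t1 ^ q.1 * t2 ^ q.2.1 * t3 ^ q.2.2.1 * t4 ^ q.2.2.2 /
    ((q.1.factorial : ℝ) * q.2.1.factorial * q.2.2.1.factorial * q.2.2.2.factorial)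

private lemma gq_abs_le {lam : ℝ} (hlam : 0 < lam) (t1 t2 t3 t4 : ℝ) (q : ℕ × ℕ × ℕ × ℕ) :
    |gq lam t1 t2 t3 t4 q| ≤ (4 * (lam + 1) * |t1|) ^ q.1 * ((4 * (lam + 1) * |t2|) ^ q.2.1 *
      ((4 * (lam + 1) * |t3|) ^ q.2.2.1 * (4 * (lam + 1) * |t4|) ^ q.2.2.2)) := by
  obtain ⟨i, j, l, m⟩ := q
  simp only [gq, sumIdx]
  set k : ℕ := i + j + l + m with hk
  have hD : (0:ℝ) < (i.factorial : ℝ) * j.factorial * l.factorial * m.factorial := by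
    have h1 := Nat.factorial_pos i
    have h2 := Nat.factorial_pos j
    have h3 := Nat.factorial_pos l
    have h4 := Nat.factorial_pos m
    positivity
  have hasc : (0:ℝ) < (ascPochhammer ℝ k).eval lam := asc_pos hlam k
  have habs : |(ascPochhammer ℝ k).eval lam * t1 ^ i * t2 ^ j * t3 ^ l * t4 ^ m /
      ((i.factorial : ℝ) * j.factorial * l.factorial * m.factorial)|
      = (ascPochhammer ℝ k).eval lam * |t1| ^ i * |t2| ^ j * |t3| ^ l * |t4| ^ m /
      ((i.factorial : ℝ) * j.factorial * l.factorial * m.factorial) := by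
    rw [abs_div, abs_of_pos hD, abs_mul, abs_mul, abs_mul, abs_mul, abs_of_pos hasc,
      abs_pow, abs_pow, abs_pow, abs_pow]
  rw [habs, div_le_iff₀ hD]
  have hP : (0:ℝ) ≤ |t1| ^ i * |t2| ^ j * |t3| ^ l * |t4| ^ m := by positivity
  have hfact : (k.factorial : ℝ) ≤ 4 ^ k *
      ((i.factorial : ℝ) * j.factorial * l.factorial * m.factorial) := by
    have := fact_four_le i j l m
    exact_mod_cast this
  have hexp : ∀ c : ℝ, c ^ k = c ^ i * c ^ j * c ^ l * c ^ m := fun c => by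
    rw [hk, pow_add, pow_add, pow_add]
  calc (ascPochhammer ℝ k).eval lam * |t1| ^ i * |t2| ^ j * |t3| ^ l * |t4| ^ m
      = (ascPochhammer ℝ k).eval lam * (|t1| ^ i * |t2| ^ j * |t3| ^ l * |t4| ^ m) := by ring
    _ ≤ ((lam + 1) ^ k * k.factorial) * (|t1| ^ i * |t2| ^ j * |t3| ^ l * |t4| ^ m) :=
        mul_le_mul_of_nonneg_right (asc_le hlam k) hP
    _ ≤ ((lam + 1) ^ k * (4 ^ k *
          ((i.factorial : ℝ) * j.factorial * l.factorial * m.factorial))) *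
          (|t1| ^ i * |t2| ^ j * |t3| ^ l * |t4| ^ m) := by
        have h0 : (0:ℝ) ≤ (lam + 1) ^ k := by positivity
        exact mul_le_mul_of_nonneg_right (mul_le_mul_of_nonneg_left hfact h0) hP
    _ = (4 * (lam + 1) * |t1|) ^ i * ((4 * (lam + 1) * |t2|) ^ j *
          ((4 * (lam + 1) * |t3|) ^ l * (4 * (lam + 1) * |t4|) ^ m)) *
          ((i.factorial : ℝ) * j.factorial * l.factorial * m.factorial) := by
        simp only [mul_pow]
        rw [hexp (lam + 1), hexp 4]
        ring

private lemma gq_summable {lam : ℝ} (hlam : 0 < lam) {t1 t2 t3 t4 : ℝ}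
    (h1 : 4 * (lam + 1) * |t1| < 1) (h2 : 4 * (lam + 1) * |t2| < 1)
    (h3 : 4 * (lam + 1) * |t3| < 1) (h4 : 4 * (lam + 1) * |t4| < 1) :
    Summable (gq lam t1 t2 t3 t4) := by
  have hn : ∀ t : ℝ, 0 ≤ 4 * (lam + 1) * |t| := fun t => by positivity
  have s1 := summable_geometric_of_lt_one (hn t1) h1
  have s2 := summable_geometric_of_lt_one (hn t2) h2
  have s3 := summable_geometric_of_lt_one (hn t3) h3
  have s4 := summable_geometric_of_lt_one (hn t4) h4
  have pn : ∀ (t : ℝ) (n : ℕ), 0 ≤ (4 * (lam + 1) * |t|) ^ n := fun t n => by positivity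
  have s34 := s3.mul_of_nonneg s4 (pn t3) (pn t4)
  have s234 := s2.mul_of_nonneg s34
    (pn t2) (fun p => mul_nonneg (pn t3 p.1) (pn t4 p.2))
  have s1234 := s1.mul_of_nonneg s234 (pn t1)
    (fun p => mul_nonneg (pn t2 p.1) (mul_nonneg (pn t3 p.2.1) (pn t4 p.2.2)))
  rw [← summable_abs_iff]
  exact Summable.of_nonneg_of_le (fun q => abs_nonneg _)
    (fun q => gq_abs_le hlam t1 t2 t3 t4 q) s1234

private lemma fiber_sum_k {lam : ℝ} (t1 t2 t3 t4 : ℝ)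
    (hsum : Summable (gq lam t1 t2 t3 t4)) (k : ℕ) :
    ∑' (q : (sumIdx ⁻¹' {k} : Set (ℕ × ℕ × ℕ × ℕ))), gq lam t1 t2 t3 t4 q
      = bc lam k * (t1 + t2 + t3 + t4) ^ k := by
  classical
  set Fk : Finset (ℕ × ℕ × ℕ × ℕ) :=
    (Finset.range (k+1) ×ˢ Finset.range (k+1) ×ˢ Finset.range (k+1) ×ˢ
      Finset.range (k+1)).filter (fun q => sumIdx q = k) with hFk
  have hmemFk : ∀ q : ℕ × ℕ × ℕ × ℕ, q ∈ Fk ↔ sumIdx q = k := by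
    intro q
    obtain ⟨i, j, l, m⟩ := q
    rw [hFk, Finset.mem_filter]
    simp only [hFk, Finset.mem_filter, Finset.mem_product, Finset.mem_range, sumIdx]
    omega
  rw [_root_.tsum_subtype]
  have hnot : ∀ q ∉ Fk, (sumIdx ⁻¹' {k}).indicator (gq lam t1 t2 t3 t4) q = 0 := by
    intro q hq
    apply Set.indicator_of_notMem
    intro hmem
    simp only [Set.mem_preimage, Set.mem_singleton_iff] at hmem
    exact hq ((hmemFk q).2 hmem)
  rw [tsum_eq_sum hnot]
  have hyes : ∀ q ∈ Fk, (sumIdx ⁻¹' {k}).indicator (gq lam t1 t2 t3 t4) q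
      = gq lam t1 t2 t3 t4 q := by
    intro q hq
    apply Set.indicator_of_mem
    simp only [Set.mem_preimage, Set.mem_singleton_iff]
    exact (hmemFk q).1 hq
  rw [Finset.sum_congr rfl hyes]
  -- multinomial theorem
  set t : Fin 4 → ℝ := ![t1, t2, t3, t4] with htdef
  have hx4 : t1 + t2 + t3 + t4 = ∑ c, t c := by
    rw [Fin.sum_univ_four]
    simp [htdef]
  rw [hx4, Finset.sum_pow_eq_sum_piAntidiag Finset.univ t k, Finset.mul_sum]
  refine Finset.sum_nbij' (i := fun q => ![q.1, q.2.1, q.2.2.1, q.2.2.2])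
    (j := fun f => (f 0, f 1, f 2, f 3)) ?_ ?_ ?_ ?_ ?_
  · intro q hq
    rw [Finset.mem_piAntidiag]
    refine ⟨?_, fun c _ => Finset.mem_univ c⟩
    rw [Fin.sum_univ_four]
    simpa [sumIdx] using (hmemFk q).1 hq
  · intro f hf
    rw [Finset.mem_piAntidiag] at hf
    rw [hmemFk]
    have := hf.1
    rw [Fin.sum_univ_four] at this
    simpa [sumIdx] using this
  · intro q hq
    rfl
  · intro f hf
    funext c
    fin_cases c <;> rfl
  · intro q hq
    have hqk : sumIdx q = k := (hmemFk q).1 hq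
    obtain ⟨i, j, l, m⟩ := q
    have hsum4 : ∑ c, (![i, j, l, m] : Fin 4 → ℕ) c = k := by
      rw [Fin.sum_univ_four]
      simpa [sumIdx] using hqk
    have hspec := Nat.multinomial_spec Finset.univ (![i, j, l, m] : Fin 4 → ℕ)
    rw [hsum4] at hspec
    have hprod4 : ∏ c, ((![i, j, l, m] : Fin 4 → ℕ) c).factorial
        = i.factorial * j.factorial * l.factorial * m.factorial := by
      rw [Fin.prod_univ_four]
      rfl
    rw [hprod4] at hspec
    have hspecR : ((i.factorial * j.factorial * l.factorial * m.factorial : ℕ) : ℝ) *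
        (Nat.multinomial Finset.univ (![i, j, l, m] : Fin 4 → ℕ) : ℝ) = (k.factorial : ℝ) := by
      exact_mod_cast congrArg (fun n : ℕ => (n : ℝ)) hspec
    have hprodt : ∏ c, t c ^ (![i, j, l, m] : Fin 4 → ℕ) c
        = t1 ^ i * t2 ^ j * t3 ^ l * t4 ^ m := by
      rw [Fin.prod_univ_four]
      simp [htdef]
    simp only [sumIdx] at hqk
    simp only [gq, sumIdx]
    rw [hqk, hprodt]
    rw [bc]
    have hf1 : ((i.factorial : ℝ) * j.factorial * l.factorial * m.factorial) ≠ 0 := by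
      have h1 := Nat.factorial_pos i
      have h2 := Nat.factorial_pos j
      have h3 := Nat.factorial_pos l
      have h4 := Nat.factorial_pos m
      positivity
    have hf2 : (k.factorial : ℝ) ≠ 0 := by
      have := Nat.factorial_pos k
      positivity
    push_cast at hspecR ⊢
    field_simp
    linear_combination (-((ascPochhammer ℝ k).eval lam *
      (t1 ^ i * t2 ^ j * t3 ^ l * t4 ^ m))) * hspecR

private lemma fiber_sum_alpha {lam : ℝ} (t1 t2 t3 t4 : ℝ)
    (hsum : Summable (gq lam t1 t2 t3 t4)) (a1 a2 a3 : ℕ) :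
    ∑' (q : (alphaIdx ⁻¹' {(a1, a2, a3)} : Set (ℕ × ℕ × ℕ × ℕ))), gq lam t1 t2 t3 t4 q
      = ∑ k ∈ Finset.Icc (max a1 (max a2 a3)) ((a1 + a2 + a3) / 2),
          gq lam t1 t2 t3 t4 (k - a3, k - a2, k - a1, a1 + a2 + a3 - 2 * k) := by
  classical
  set φ : ℕ → ℕ × ℕ × ℕ × ℕ := fun k => (k - a3, k - a2, k - a1, a1 + a2 + a3 - 2 * k) with hφ
  set I : Finset ℕ := Finset.Icc (max a1 (max a2 a3)) ((a1 + a2 + a3) / 2) with hI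
  have hmemI : ∀ k, k ∈ I ↔ (a1 ≤ k ∧ a2 ≤ k ∧ a3 ≤ k ∧ 2 * k ≤ a1 + a2 + a3) := by
    intro k
    simp only [hI, Finset.mem_Icc, max_le_iff]
    omega
  set Gα : Finset (ℕ × ℕ × ℕ × ℕ) := I.image φ with hG
  have hmemG : ∀ q, q ∈ Gα ↔ alphaIdx q = (a1, a2, a3) := by
    intro q
    constructor
    · intro hq
      obtain ⟨k, hkI, rfl⟩ := Finset.mem_image.1 hq
      rw [hmemI] at hkI
      simp only [hφ, alphaIdx, Prod.mk.injEq]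
      omega
    · intro hq
      obtain ⟨i, j, l, m⟩ := q
      simp only [alphaIdx, Prod.mk.injEq] at hq
      apply Finset.mem_image.2
      refine ⟨i + j + l + m, ?_, ?_⟩
      · rw [hmemI]; omega
      · simp only [hφ, Prod.mk.injEq]; omega
  rw [_root_.tsum_subtype]
  have hnot : ∀ q ∉ Gα,
      (alphaIdx ⁻¹' {(a1, a2, a3)}).indicator (gq lam t1 t2 t3 t4) q = 0 := by
    intro q hq
    apply Set.indicator_of_notMem
    intro hmem
    simp only [Set.mem_preimage, Set.mem_singleton_iff] at hmem
    exact hq ((hmemG q).2 hmem)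
  rw [tsum_eq_sum hnot]
  have hyes : ∀ q ∈ Gα, (alphaIdx ⁻¹' {(a1, a2, a3)}).indicator (gq lam t1 t2 t3 t4) q
      = gq lam t1 t2 t3 t4 q := by
    intro q hq
    apply Set.indicator_of_mem
    simp only [Set.mem_preimage, Set.mem_singleton_iff]
    exact (hmemG q).1 hq
  rw [Finset.sum_congr rfl hyes, hG]
  have hinj : ∀ x ∈ I, ∀ y ∈ I, φ x = φ y → x = y := by
    intro x hx y hy hxy
    rw [hmemI] at hx hy
    simp only [hφ, Prod.mk.injEq] at hxy
    omega
  rw [Finset.sum_image hinj]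

private lemma tbound {lam C ε b z w : ℝ} (hlam : 0 < lam) (hC0 : 0 < C)
    (hC : (lam + 1) * (|b| + 1) ≤ C) (hε0 : 0 < ε) (hε1 : ε ≤ 1) (hε2 : 8 * C * ε ≤ 1)
    (hz : |z| < ε) (hw : |w| < ε) :
    4 * (lam + 1) * |b * z * w| < 1 := by
  have h1 : |b * z * w| = |b| * |z| * |w| := by rw [abs_mul, abs_mul]
  have h2 : 4 * (lam + 1) * (|b| * |z| * |w|) ≤ 4 * (lam + 1) * (|b| * ε * ε) := by
    gcongr <;> first | positivity | exact hz.le | exact hw.le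
  have hCb : (lam + 1) * |b| ≤ C := by nlinarith [abs_nonneg b]
  have h3 : 4 * (lam + 1) * (|b| * ε * ε) = 4 * ((lam + 1) * |b|) * ε * ε := by ring
  have h4 : 4 * ((lam + 1) * |b|) * ε * ε ≤ 4 * C * ε * ε := by
    gcongr <;> positivity
  have h5 : 4 * C * ε * ε < 1 := by nlinarith [mul_le_mul_of_nonneg_right hε2 hε0.le]
  calc 4 * (lam + 1) * |b * z * w| = 4 * (lam + 1) * (|b| * |z| * |w|) := by rw [h1]
    _ ≤ 4 * (lam + 1) * (|b| * ε * ε) := h2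
    _ = 4 * ((lam + 1) * |b|) * ε * ε := h3
    _ ≤ 4 * C * ε * ε := h4
    _ < 1 := h5

private lemma tsmall {lam t : ℝ} (hlam : 0 < lam) (h : 4 * (lam + 1) * |t| < 1) :
    |t| < 1 / 4 := by
  nlinarith [abs_nonneg t]

/-- For `n = 3`, expansion coefficients of `[1 − R₃(z)]^{-λ}` with
`R₃(z) = b̃₁₂z₁z₂ + b̃₁₃z₁z₃ + b̃₂₃z₂z₃ + b̃₁₂₃z₁z₂z₃`:  the coefficient of `z^α`
equals `∑_{max α ≤ k ≤ |α|/2} (λ)_k b̃₁₂^{k-α₃} b̃₁₃^{k-α₂} b̃₂₃^{k-α₁}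
b̃₁₂₃^{|α|-2k} / ((k-α₃)!(k-α₂)!(k-α₁)!(|α|-2k)!)` — an empty sum (hence `0`)
when `max α > |α|/2`, and `1` for `α = 0`.  The identity holds for all `z` in a
small enough neighbourhood of `0`. -/
theorem stmt_16 (lam b12 b13 b23 b123 : ℝ) (hlam : 0 < lam) :
    ∃ ε > 0, ∀ z1 z2 z3 : ℝ, |z1| < ε → |z2| < ε → |z3| < ε →
      (1 - (b12 * z1 * z2 + b13 * z1 * z3 + b23 * z2 * z3 + b123 * z1 * z2 * z3)) ^ (-lam)
        = ∑' α : ℕ × ℕ × ℕ,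
            (∑ k ∈ Finset.Icc (max α.1 (max α.2.1 α.2.2)) ((α.1 + α.2.1 + α.2.2) / 2),
              (ascPochhammer ℝ k).eval lam * b12 ^ (k - α.2.2) * b13 ^ (k - α.2.1) *
                b23 ^ (k - α.1) * b123 ^ (α.1 + α.2.1 + α.2.2 - 2 * k) /
                ((Nat.factorial (k - α.2.2) : ℝ) * Nat.factorial (k - α.2.1) *
                  Nat.factorial (k - α.1) * Nat.factorial (α.1 + α.2.1 + α.2.2 - 2 * k))) *
            z1 ^ α.1 * z2 ^ α.2.1 * z3 ^ α.2.2 := by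
  classical
  have hl1 : (0:ℝ) < lam + 1 := by linarith
  set C : ℝ := (lam + 1) * (|b12| + |b13| + |b23| + |b123| + 1) with hCdef
  have hC0 : 0 < C := by
    rw [hCdef]
    have h1 := abs_nonneg b12
    have h2 := abs_nonneg b13
    have h3 := abs_nonneg b23
    have h4 := abs_nonneg b123
    positivity
  refine ⟨min 1 (1 / (8 * C)), lt_min one_pos (by positivity), ?_⟩
  intro z1 z2 z3 hz1 hz2 hz3
  set ε : ℝ := min 1 (1 / (8 * C)) with hεdef
  have hε0 : 0 < ε := lt_min one_pos (by positivity)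
  have hε1 : ε ≤ 1 := min_le_left _ _
  have hε2 : 8 * C * ε ≤ 1 := by
    have h := min_le_right 1 (1 / (8 * C))
    rw [le_div_iff₀ (by positivity : (0:ℝ) < 8 * C)] at h
    rw [hεdef]
    linarith
  have hb1 := abs_nonneg b12
  have hb2 := abs_nonneg b13
  have hb3 := abs_nonneg b23
  have hb4 := abs_nonneg b123
  have hCb12 : (lam + 1) * (|b12| + 1) ≤ C := by rw [hCdef]; nlinarith
  have hCb13 : (lam + 1) * (|b13| + 1) ≤ C := by rw [hCdef]; nlinarith
  have hCb23 : (lam + 1) * (|b23| + 1) ≤ C := by rw [hCdef]; nlinarith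
  have h1 : 4 * (lam + 1) * |b12 * z1 * z2| < 1 :=
    tbound hlam hC0 hCb12 hε0 hε1 hε2 hz1 hz2
  have h2 : 4 * (lam + 1) * |b13 * z1 * z3| < 1 :=
    tbound hlam hC0 hCb13 hε0 hε1 hε2 hz1 hz3
  have h3 : 4 * (lam + 1) * |b23 * z2 * z3| < 1 :=
    tbound hlam hC0 hCb23 hε0 hε1 hε2 hz2 hz3
  have hb123z : |b123 * z1| ≤ |b123| := by
    rw [abs_mul]
    have hz1' : |z1| ≤ 1 := le_trans hz1.le hε1
    nlinarith [abs_nonneg z1]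
  have hCb123 : (lam + 1) * (|b123 * z1| + 1) ≤ C := by
    rw [hCdef]; nlinarith
  have h4 : 4 * (lam + 1) * |b123 * z1 * z2 * z3| < 1 :=
    tbound hlam hC0 hCb123 hε0 hε1 hε2 hz2 hz3
  set x : ℝ := b12 * z1 * z2 + b13 * z1 * z3 + b23 * z2 * z3 + b123 * z1 * z2 * z3 with hx
  have hx1 : |x| < 1 := by
    have k1 := tsmall hlam h1
    have k2 := tsmall hlam h2
    have k3 := tsmall hlam h3
    have k4 := tsmall hlam h4
    have a1 := abs_add_le (b12 * z1 * z2 + b13 * z1 * z3 + b23 * z2 * z3) (b123 * z1 * z2 * z3)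
    have a2 := abs_add_le (b12 * z1 * z2 + b13 * z1 * z3) (b23 * z2 * z3)
    have a3 := abs_add_le (b12 * z1 * z2) (b13 * z1 * z3)
    rw [hx]
    linarith
  have hsum : Summable (gq lam (b12 * z1 * z2) (b13 * z1 * z3) (b23 * z2 * z3)
      (b123 * z1 * z2 * z3)) := gq_summable hlam h1 h2 h3 h4
  have hS := hsum.hasSum
  have hk := hS.tsum_fiberwise sumIdx
  have hkfun : (fun k : ℕ => ∑' (q : (sumIdx ⁻¹' {k} : Set (ℕ × ℕ × ℕ × ℕ))),
      gq lam (b12 * z1 * z2) (b13 * z1 * z3) (b23 * z2 * z3) (b123 * z1 * z2 * z3) q)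
      = fun k => bc lam k * x ^ k := by
    funext k
    rw [fiber_sum_k _ _ _ _ hsum k, ← hx]
  rw [hkfun] at hk
  have hAlpha := hS.tsum_fiberwise alphaIdx
  have hafun : (fun α : ℕ × ℕ × ℕ => ∑' (q : (alphaIdx ⁻¹' {α} : Set (ℕ × ℕ × ℕ × ℕ))),
      gq lam (b12 * z1 * z2) (b13 * z1 * z3) (b23 * z2 * z3) (b123 * z1 * z2 * z3) q)
      = fun α : ℕ × ℕ × ℕ =>
            (∑ k ∈ Finset.Icc (max α.1 (max α.2.1 α.2.2)) ((α.1 + α.2.1 + α.2.2) / 2),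
              (ascPochhammer ℝ k).eval lam * b12 ^ (k - α.2.2) * b13 ^ (k - α.2.1) *
                b23 ^ (k - α.1) * b123 ^ (α.1 + α.2.1 + α.2.2 - 2 * k) /
                ((Nat.factorial (k - α.2.2) : ℝ) * Nat.factorial (k - α.2.1) *
                  Nat.factorial (k - α.1) * Nat.factorial (α.1 + α.2.1 + α.2.2 - 2 * k))) *
            z1 ^ α.1 * z2 ^ α.2.1 * z3 ^ α.2.2 := by
    funext α
    obtain ⟨a1, a2, a3⟩ := α
    rw [fiber_sum_alpha _ _ _ _ hsum a1 a2 a3]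
    simp only
    rw [Finset.sum_mul, Finset.sum_mul, Finset.sum_mul]
    apply Finset.sum_congr rfl
    intro k hk
    simp only [Finset.mem_Icc, max_le_iff] at hk
    obtain ⟨⟨hka1, hka2, hka3⟩, hk2⟩ := hk
    have h2k : 2 * k ≤ a1 + a2 + a3 := by omega
    simp only [gq, sumIdx]
    have ek : k - a3 + (k - a2) + (k - a1) + (a1 + a2 + a3 - 2 * k) = k := by omega
    rw [ek]
    set i : ℕ := k - a3 with hi
    set j : ℕ := k - a2 with hj
    set l : ℕ := k - a1 with hl
    set m : ℕ := a1 + a2 + a3 - 2 * k with hm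
    have e1 : a1 = i + j + m := by omega
    have e2 : a2 = i + l + m := by omega
    have e3 : a3 = j + l + m := by omega
    rw [e1, e2, e3]
    simp only [mul_pow, pow_add]
    ring
  rw [hafun] at hAlpha
  have hbinom := binom_hasSum hlam hx1
  rw [hbinom.unique hk]
  exact hAlpha.tsum_eq.symm
end
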